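/- arXiv:1006.3459 — 6 statements merged into one kernel-verified Lean document; each statement's English description precedes it below -/
import Mathlib

section
/- Let T > 0 and let B₁, B₂, d₁, d₂ : ℝ × [0,∞) → ℝ be nonnegative functions, T-periodic in the time variable t. Fix μ₁, μ₂ ∈ ℝ and suppose φ¹ is a positive T-periodic subeigenfunction for (B₁, d₁, μ₁) and φ² is a positive T-periodic subeigenfunction for (B₂, d₂, μ₂). Then for every θ ∈ [0,1], the function φ^θ(t,x) = φ¹(t,x)^θ · φ²(t,x)^{1−θ} is a positive T-periodic subeigenfunction for (B^θ, d^θ, θμ₁ + (1−θ)μ₂), where B^θ(t,x) = B₁(t,x)^θ · B₂(t,x)^{1−θ} and d^θ(t,x) = θ d₁(t,x) + (1−θ) d₂(t,x). -/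
open MeasureTheory Real

noncomputable section

/-- A positive `T`-periodic subeigenfunction for birth rate `B`, death rate `d`
and value `μ` : an everywhere positive function `φ` on `ℝ × [0,∞)`,
differentiable in both variables, `T`-periodic in `t`, satisfying
`-∂ₜφ - ∂ₓφ + (d + μ) φ ≥ B(t,x) φ(t,0)` for all `t ∈ ℝ`, `x ≥ 0`. -/
def IsSubeig (T : ℝ) (B d : ℝ → ℝ → ℝ) (μ : ℝ) (φ : ℝ → ℝ → ℝ) : Prop :=
  (∀ t x, 0 ≤ x → 0 < φ t x) ∧
  (∀ t x, 0 ≤ x → DifferentiableAt ℝ (fun p : ℝ × ℝ => φ p.1 p.2) (t, x)) ∧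
  (∀ t x, 0 ≤ x → φ (t + T) x = φ t x) ∧
  (∀ t x, 0 ≤ x →
    B t x * φ t 0 ≤
      -(deriv (fun s => φ s x) t) - deriv (fun y => φ t y) x + (d t x + μ) * φ t x)

/-!
Dividing the subeigenfunction inequality by `φ(t,x) > 0` turns it into
`B φ(t,0)/φ(t,x) ≤ -∂ₜ log φ - ∂ₓ log φ + d + μ`. The right-hand side is affine in `log φ`, and
`log φ^θ = θ log φ¹ + (1-θ) log φ²`, so for the interpolated data it is the convex combination of
the two right-hand sides, while the left-hand side is the weighted geometric mean of the two
left-hand sides. Weighted AM-GM concludes.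
-/

theorem DifferentiableAt.of_uncurry_left {𝕜 E F G : Type*} [NontriviallyNormedField 𝕜]
    [NormedAddCommGroup E] [NormedSpace 𝕜 E] [NormedAddCommGroup F] [NormedSpace 𝕜 F]
    [NormedAddCommGroup G] [NormedSpace 𝕜 G] {f : E → F → G} {x : E} {y : F}
    (h : DifferentiableAt 𝕜 (fun p : E × F => f p.1 p.2) (x, y)) :
    DifferentiableAt 𝕜 (fun x => f x y) x :=
  h.comp (f := fun x => (x, y)) x (differentiableAt_id.prodMk (differentiableAt_const y))

theorem DifferentiableAt.of_uncurry_right {𝕜 E F G : Type*} [NontriviallyNormedField 𝕜]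
    [NormedAddCommGroup E] [NormedSpace 𝕜 E] [NormedAddCommGroup F] [NormedSpace 𝕜 F]
    [NormedAddCommGroup G] [NormedSpace 𝕜 G] {f : E → F → G} {x : E} {y : F}
    (h : DifferentiableAt 𝕜 (fun p : E × F => f p.1 p.2) (x, y)) :
    DifferentiableAt 𝕜 (fun y => f x y) y :=
  h.comp (f := fun y => (x, y)) y ((differentiableAt_const x).prodMk differentiableAt_id)

theorem logDeriv_rpow_mul_rpow {f g : ℝ → ℝ} {x : ℝ} (α β : ℝ)
    (hf : DifferentiableAt ℝ f x) (hg : DifferentiableAt ℝ g x) (hfx : 0 < f x) (hgx : 0 < g x) :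
    logDeriv (fun y => f y ^ α * g y ^ β) x = α * logDeriv f x + β * logDeriv g x := by
  have hderiv := (hf.hasDerivAt.rpow_const (p := α) (Or.inl hfx.ne')).fun_mul
    (hg.hasDerivAt.rpow_const (p := β) (Or.inl hgx.ne'))
  rw [logDeriv_apply, hderiv.deriv, logDeriv_apply, logDeriv_apply,
    rpow_sub_one hfx.ne', rpow_sub_one hgx.ne']
  have : 0 < f x ^ α := rpow_pos_of_pos hfx α
  have : 0 < g x ^ β := rpow_pos_of_pos hgx β
  field_simp

theorem rpow_mul_rpow_mul_div {a₁ a₂ b₁ b₂ c₁ c₂ : ℝ} (α β : ℝ)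
    (ha₁ : 0 ≤ a₁) (ha₂ : 0 ≤ a₂) (hb₁ : 0 ≤ b₁) (hb₂ : 0 ≤ b₂) (hc₁ : 0 < c₁) (hc₂ : 0 < c₂) :
    a₁ ^ α * a₂ ^ β * (b₁ ^ α * b₂ ^ β) / (c₁ ^ α * c₂ ^ β) =
      (a₁ * b₁ / c₁) ^ α * (a₂ * b₂ / c₂) ^ β := by
  rw [div_rpow (mul_nonneg ha₁ hb₁) hc₁.le, div_rpow (mul_nonneg ha₂ hb₂) hc₂.le,
    mul_rpow ha₁ hb₁, mul_rpow ha₂ hb₂]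
  have : 0 < c₁ ^ α := rpow_pos_of_pos hc₁ α
  have : 0 < c₂ ^ β := rpow_pos_of_pos hc₂ β
  field_simp

theorem isSubeig_iff_logDeriv (T : ℝ) (B d : ℝ → ℝ → ℝ) (μ : ℝ) (φ : ℝ → ℝ → ℝ) :
    IsSubeig T B d μ φ ↔
      (∀ t x, 0 ≤ x → 0 < φ t x) ∧
      (∀ t x, 0 ≤ x → DifferentiableAt ℝ (fun p : ℝ × ℝ => φ p.1 p.2) (t, x)) ∧
      (∀ t x, 0 ≤ x → φ (t + T) x = φ t x) ∧
      (∀ t x, 0 ≤ x → B t x * φ t 0 / φ t x ≤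
        -logDeriv (fun s => φ s x) t - logDeriv (fun y => φ t y) x + (d t x + μ)) := by
  refine and_congr_right fun hpos => and_congr_right' <| and_congr_right' <|
    forall_congr' fun t => forall_congr' fun x => imp_congr_right fun hx => ?_
  have hφ := hpos t x hx
  rw [logDeriv_apply, logDeriv_apply, div_le_iff₀ hφ]
  congr! 1
  field_simp

theorem subeig_geometric_convex_combination_general
    (T : ℝ) (B₁ B₂ d₁ d₂ : ℝ → ℝ → ℝ)
    (hB₁ : ∀ t x, 0 ≤ x → 0 ≤ B₁ t x) (hB₂ : ∀ t x, 0 ≤ x → 0 ≤ B₂ t x)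
    (μ₁ μ₂ : ℝ) (φ₁ φ₂ : ℝ → ℝ → ℝ)
    (h₁ : IsSubeig T B₁ d₁ μ₁ φ₁) (h₂ : IsSubeig T B₂ d₂ μ₂ φ₂)
    (θ : ℝ) (hθ : θ ∈ Set.Icc (0 : ℝ) 1) :
    IsSubeig T
      (fun t x => B₁ t x ^ θ * B₂ t x ^ (1 - θ))
      (fun t x => θ * d₁ t x + (1 - θ) * d₂ t x)
      (θ * μ₁ + (1 - θ) * μ₂)
      (fun t x => φ₁ t x ^ θ * φ₂ t x ^ (1 - θ)) := by
  rw [isSubeig_iff_logDeriv] at h₁ h₂ ⊢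
  obtain ⟨hpos₁, hdiff₁, hper₁, hineq₁⟩ := h₁
  obtain ⟨hpos₂, hdiff₂, hper₂, hineq₂⟩ := h₂
  have hθ' : 0 ≤ 1 - θ := sub_nonneg.2 hθ.2
  refine ⟨fun t x hx => by have := hpos₁ t x hx; have := hpos₂ t x hx; positivity,
    fun t x hx => ((hdiff₁ t x hx).rpow_const (Or.inl (hpos₁ t x hx).ne')).mul
      ((hdiff₂ t x hx).rpow_const (Or.inl (hpos₂ t x hx).ne')),
    fun t x hx => by simp only [hper₁ t x hx, hper₂ t x hx], fun t x hx => ?_⟩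
  have hx₁ := hpos₁ t x hx
  have hx₂ := hpos₂ t x hx
  have h0₁ := (hpos₁ t 0 le_rfl).le
  have h0₂ := (hpos₂ t 0 le_rfl).le
  rw [rpow_mul_rpow_mul_div θ (1 - θ) (hB₁ t x hx) (hB₂ t x hx) h0₁ h0₂ hx₁ hx₂,
    logDeriv_rpow_mul_rpow θ (1 - θ) (hdiff₁ t x hx).of_uncurry_left
      (hdiff₂ t x hx).of_uncurry_left hx₁ hx₂,
    logDeriv_rpow_mul_rpow θ (1 - θ) (hdiff₁ t x hx).of_uncurry_right
      (hdiff₂ t x hx).of_uncurry_right hx₁ hx₂]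
  calc _ ≤ θ * (B₁ t x * φ₁ t 0 / φ₁ t x) + (1 - θ) * (B₂ t x * φ₂ t 0 / φ₂ t x) :=
        geom_mean_le_arith_mean2_weighted hθ.1 hθ'
          (div_nonneg (mul_nonneg (hB₁ t x hx) h0₁) hx₁.le)
          (div_nonneg (mul_nonneg (hB₂ t x hx) h0₂) hx₂.le) (by ring)
    _ ≤ _ := by
        linarith [mul_le_mul_of_nonneg_left (hineq₁ t x hx) hθ.1,
          mul_le_mul_of_nonneg_left (hineq₂ t x hx) hθ']

/-- Given subeigenfunctions `φ¹` for `(B₁, d₁, μ₁)` and `φ²` for `(B₂, d₂, μ₂)`,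
the geometric interpolation `φ^θ = (φ¹)^θ (φ²)^{1-θ}` is a subeigenfunction for
the coefficients `B^θ = B₁^θ B₂^{1-θ}`, `d^θ = θ d₁ + (1-θ) d₂` and the value
`θ μ₁ + (1-θ) μ₂`. -/
theorem subeig_geometric_convex_combination
    (T : ℝ) (hT : 0 < T) (B₁ B₂ d₁ d₂ : ℝ → ℝ → ℝ)
    (hB₁ : ∀ t x, 0 ≤ x → 0 ≤ B₁ t x) (hB₂ : ∀ t x, 0 ≤ x → 0 ≤ B₂ t x)
    (hd₁ : ∀ t x, 0 ≤ x → 0 ≤ d₁ t x) (hd₂ : ∀ t x, 0 ≤ x → 0 ≤ d₂ t x)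
    (hB₁p : ∀ t x, 0 ≤ x → B₁ (t + T) x = B₁ t x)
    (hB₂p : ∀ t x, 0 ≤ x → B₂ (t + T) x = B₂ t x)
    (hd₁p : ∀ t x, 0 ≤ x → d₁ (t + T) x = d₁ t x)
    (hd₂p : ∀ t x, 0 ≤ x → d₂ (t + T) x = d₂ t x)
    (μ₁ μ₂ : ℝ) (φ₁ φ₂ : ℝ → ℝ → ℝ)
    (h₁ : IsSubeig T B₁ d₁ μ₁ φ₁) (h₂ : IsSubeig T B₂ d₂ μ₂ φ₂)
    (θ : ℝ) (hθ : θ ∈ Set.Icc (0 : ℝ) 1) :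
    IsSubeig T
      (fun t x => B₁ t x ^ θ * B₂ t x ^ (1 - θ))
      (fun t x => θ * d₁ t x + (1 - θ) * d₂ t x)
      (θ * μ₁ + (1 - θ) * μ₂)
      (fun t x => φ₁ t x ^ θ * φ₂ t x ^ (1 - θ)) :=
  subeig_geometric_convex_combination_general T B₁ B₂ d₁ d₂ hB₁ hB₂ μ₁ μ₂ φ₁ φ₂ h₁ h₂ θ hθ
end
end

section
/- Let T > 0 and let B₁, B₂, d₁, d₂ : ℝ × [0,∞) → ℝ be nonnegative functions, T-periodic in t. For nonnegative T-periodic coefficients (B,d), let S(B,d) ⊆ ℝ denote the set of μ ∈ ℝ admitting a positive T-periodic subeigenfunction for (B, d, μ), and define the relaxed Floquet eigenvalue λ_F(B,d) = inf S(B,d). Fix θ ∈ [0,1] and set B^θ(t,x) = B₁(t,x)^θ · B₂(t,x)^{1−θ} and d^θ(t,x) = θ d₁(t,x) + (1−θ) d₂(t,x). Assume S(B₁,d₁) and S(B₂,d₂) are nonempty and that S(B₁,d₁), S(B₂,d₂) and S(B^θ,d^θ) are bounded below. Then λ_F(B^θ, d^θ) ≤ θ λ_F(B₁, d₁) + (1−θ)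 λ_F(B₂, d₂). -/
open MeasureTheory Real

noncomputable section

/-- The set of `μ` admitting a positive `T`-periodic subeigenfunction. -/
def subeigSet (T : ℝ) (B d : ℝ → ℝ → ℝ) : Set ℝ :=
  {μ : ℝ | ∃ φ : ℝ → ℝ → ℝ, IsSubeig T B d μ φ}

/-- The relaxed Floquet eigenvalue `λ_F(B,d) = inf S(B,d)`. -/
def lambdaF (T : ℝ) (B d : ℝ → ℝ → ℝ) : ℝ :=
  sInf (subeigSet T B d)

/-!
If `φ₁, φ₂` are subeigenfunctions for `(B₁, d₁, μ₁)` and `(B₂, d₂, μ₂)`, then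
`φ = φ₁ ^ θ * φ₂ ^ (1 - θ)` is one for `(B^θ, d^θ, θ μ₁ + (1 - θ) μ₂)`. Divided by `φ`, the
subeigenfunction inequality involves only logarithmic derivatives, which are `θ`-affine along
the geometric mean, while the birth term `B^θ φ(t,0) / φ(t,x)` is the weighted geometric mean
of the two birth terms; weighted AM–GM closes the inequality. Taking infima over `μ₁` and `μ₂`
gives the convexity of `λ_F`.
-/

section

variable {𝕜 E F G : Type*} [NontriviallyNormedField 𝕜]
  [NormedAddCommGroup E] [NormedSpace 𝕜 E] [NormedAddCommGroup F] [NormedSpace 𝕜 F]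
  [NormedAddCommGroup G] [NormedSpace 𝕜 G] {f : E → F → G} {a : E} {b : F}

theorem DifferentiableAt.uncurry_left
    (h : DifferentiableAt 𝕜 (fun p : E × F => f p.1 p.2) (a, b)) :
    DifferentiableAt 𝕜 (fun s => f s b) a :=
  h.comp (f := fun s => (s, b)) a (differentiableAt_id.prodMk (differentiableAt_const b))

theorem DifferentiableAt.uncurry_right
    (h : DifferentiableAt 𝕜 (fun p : E × F => f p.1 p.2) (a, b)) :
    DifferentiableAt 𝕜 (fun y => f a y) b :=
  h.comp (f := fun y => (a, y)) b ((differentiableAt_const a).prodMk differentiableAt_id)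

end

theorem HasDerivAt.rpow_mul_rpow {f g : ℝ → ℝ} {f' g' s θ : ℝ}
    (hf : HasDerivAt f f' s) (hg : HasDerivAt g g' s) (hfs : 0 < f s) (hgs : 0 < g s) :
    HasDerivAt (fun r => f r ^ θ * g r ^ (1 - θ))
      (f s ^ θ * g s ^ (1 - θ) * (θ * (f' / f s) + (1 - θ) * (g' / g s))) s := by
  refine ((hf.rpow_const (Or.inl hfs.ne')).mul (hg.rpow_const (Or.inl hgs.ne'))).congr_deriv ?_
  rw [rpow_sub_one hfs.ne', rpow_sub_one hgs.ne']
  field_simp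

theorem rpow_mul_rpow_le_of_le {θ u₁ u₂ r₁ r₂ : ℝ} (hθ₀ : 0 ≤ θ) (hθ₁ : θ ≤ 1)
    (hu₁ : 0 ≤ u₁) (hu₂ : 0 ≤ u₂) (h₁ : u₁ ≤ r₁) (h₂ : u₂ ≤ r₂) :
    u₁ ^ θ * u₂ ^ (1 - θ) ≤ θ * r₁ + (1 - θ) * r₂ := by
  have hθ₁' : 0 ≤ 1 - θ := sub_nonneg.mpr hθ₁
  calc u₁ ^ θ * u₂ ^ (1 - θ) ≤ θ * u₁ + (1 - θ) * u₂ :=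
        geom_mean_le_arith_mean2_weighted hθ₀ hθ₁' hu₁ hu₂ (by ring)
    _ ≤ θ * r₁ + (1 - θ) * r₂ := by gcongr

theorem rpow_mul_rpow_mul_eq {θ b₁ b₂ p₁ p₂ a₁ a₂ : ℝ} (hb₁ : 0 ≤ b₁) (hb₂ : 0 ≤ b₂)
    (hp₁ : 0 ≤ p₁) (hp₂ : 0 ≤ p₂) (ha₁ : 0 < a₁) (ha₂ : 0 < a₂) :
    b₁ ^ θ * b₂ ^ (1 - θ) * (p₁ ^ θ * p₂ ^ (1 - θ)) =
      a₁ ^ θ * a₂ ^ (1 - θ) * ((b₁ * p₁ / a₁) ^ θ * (b₂ * p₂ / a₂) ^ (1 - θ)) := by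
  rw [div_rpow (mul_nonneg hb₁ hp₁) ha₁.le, div_rpow (mul_nonneg hb₂ hp₂) ha₂.le,
    mul_rpow hb₁ hp₁, mul_rpow hb₂ hp₂]
  have := rpow_pos_of_pos ha₁ θ
  have := rpow_pos_of_pos ha₂ (1 - θ)
  field_simp

theorem IsSubeig.rpow_mul_rpow {T θ μ₁ μ₂ : ℝ} {B₁ B₂ d₁ d₂ φ₁ φ₂ : ℝ → ℝ → ℝ}
    (hθ₀ : 0 ≤ θ) (hθ₁ : θ ≤ 1)
    (hB₁ : ∀ t x, 0 ≤ x → 0 ≤ B₁ t x) (hB₂ : ∀ t x, 0 ≤ x → 0 ≤ B₂ t x)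
    (h₁ : IsSubeig T B₁ d₁ μ₁ φ₁) (h₂ : IsSubeig T B₂ d₂ μ₂ φ₂) :
    IsSubeig T (fun t x => B₁ t x ^ θ * B₂ t x ^ (1 - θ))
      (fun t x => θ * d₁ t x + (1 - θ) * d₂ t x) (θ * μ₁ + (1 - θ) * μ₂)
      (fun t x => φ₁ t x ^ θ * φ₂ t x ^ (1 - θ)) := by
  obtain ⟨hpos₁, hdiff₁, hper₁, hineq₁⟩ := h₁
  obtain ⟨hpos₂, hdiff₂, hper₂, hineq₂⟩ := h₂
  refine ⟨fun t x hx => ?_, fun t x hx => ?_, fun t x hx => ?_, fun t x hx => ?_⟩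
  · exact mul_pos (rpow_pos_of_pos (hpos₁ t x hx) θ) (rpow_pos_of_pos (hpos₂ t x hx) _)
  · exact ((hdiff₁ t x hx).rpow_const (Or.inl (hpos₁ t x hx).ne')).mul
      ((hdiff₂ t x hx).rpow_const (Or.inl (hpos₂ t x hx).ne'))
  · simp only [hper₁ t x hx, hper₂ t x hx]
  have ha₁ := hpos₁ t x hx
  have ha₂ := hpos₂ t x hx
  have hp₁ := (hpos₁ t 0 le_rfl).le
  have hp₂ := (hpos₂ t 0 le_rfl).le
  have hDt := ((hdiff₁ t x hx).uncurry_left.hasDerivAt.rpow_mul_rpow (θ := θ)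
    (hdiff₂ t x hx).uncurry_left.hasDerivAt ha₁ ha₂).deriv
  have hDx := ((hdiff₁ t x hx).uncurry_right.hasDerivAt.rpow_mul_rpow (θ := θ)
    (hdiff₂ t x hx).uncurry_right.hasDerivAt ha₁ ha₂).deriv
  have hamgm := mul_le_mul_of_nonneg_left
    (rpow_mul_rpow_le_of_le hθ₀ hθ₁
      (div_nonneg (mul_nonneg (hB₁ t x hx) hp₁) ha₁.le)
      (div_nonneg (mul_nonneg (hB₂ t x hx) hp₂) ha₂.le)
      (div_le_div_of_nonneg_right (hineq₁ t x hx) ha₁.le)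
      (div_le_div_of_nonneg_right (hineq₂ t x hx) ha₂.le))
    (mul_pos (rpow_pos_of_pos ha₁ θ) (rpow_pos_of_pos ha₂ (1 - θ))).le
  rw [hDt, hDx, rpow_mul_rpow_mul_eq (hB₁ t x hx) (hB₂ t x hx) hp₁ hp₂ ha₁ ha₂]
  refine hamgm.trans_eq ?_
  field_simp
  ring

theorem le_mul_csInf {s : Set ℝ} {θ c : ℝ} (hs : s.Nonempty) (hθ : 0 ≤ θ)
    (h : ∀ μ ∈ s, c ≤ θ * μ) : c ≤ θ * sInf s := by
  rw [← smul_eq_mul, ← Real.sInf_smul_of_nonneg hθ]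
  exact le_csInf (hs.smul_set) (by rintro _ ⟨μ, hμ, rfl⟩; exact h μ hμ)

theorem lambdaF_convex_general
    (T : ℝ) (B₁ B₂ d₁ d₂ : ℝ → ℝ → ℝ)
    (hB₁ : ∀ t x, 0 ≤ x → 0 ≤ B₁ t x) (hB₂ : ∀ t x, 0 ≤ x → 0 ≤ B₂ t x)
    (θ : ℝ) (hθ : θ ∈ Set.Icc (0 : ℝ) 1)
    (Bθ dθ : ℝ → ℝ → ℝ)
    (hBθ : Bθ = fun t x => B₁ t x ^ θ * B₂ t x ^ (1 - θ))
    (hdθ : dθ = fun t x => θ * d₁ t x + (1 - θ) * d₂ t x)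
    (hne₁ : (subeigSet T B₁ d₁).Nonempty)
    (hne₂ : (subeigSet T B₂ d₂).Nonempty)
    (hbdθ : BddBelow (subeigSet T Bθ dθ)) :
    lambdaF T Bθ dθ ≤ θ * lambdaF T B₁ d₁ + (1 - θ) * lambdaF T B₂ d₂ := by
  obtain ⟨hθ₀, hθ₁⟩ := hθ
  have hcomb : ∀ μ₁ ∈ subeigSet T B₁ d₁, ∀ μ₂ ∈ subeigSet T B₂ d₂,
      lambdaF T Bθ dθ ≤ θ * μ₁ + (1 - θ) * μ₂ := fun μ₁ ⟨φ₁, h₁⟩ μ₂ ⟨φ₂, h₂⟩ =>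
    csInf_le hbdθ ⟨_, hBθ ▸ hdθ ▸ h₁.rpow_mul_rpow hθ₀ hθ₁ hB₁ hB₂ h₂⟩
  have hinf₂ : ∀ μ₁ ∈ subeigSet T B₁ d₁,
      lambdaF T Bθ dθ - θ * μ₁ ≤ (1 - θ) * lambdaF T B₂ d₂ := fun μ₁ hμ₁ =>
    le_mul_csInf hne₂ (sub_nonneg.mpr hθ₁) fun μ₂ hμ₂ => by linarith [hcomb μ₁ hμ₁ μ₂ hμ₂]
  have hinf₁ : lambdaF T Bθ dθ - (1 - θ) * lambdaF T B₂ d₂ ≤ θ * lambdaF T B₁ d₁ :=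
    le_mul_csInf hne₁ hθ₀ fun μ₁ hμ₁ => by linarith [hinf₂ μ₁ hμ₁]
  linarith

/-- Convexity of the relaxed Floquet eigenvalue: it is convex in the death rate
and geometrically convex in the birth rate. -/
theorem lambdaF_convex
    (T : ℝ) (hT : 0 < T) (B₁ B₂ d₁ d₂ : ℝ → ℝ → ℝ)
    (hB₁ : ∀ t x, 0 ≤ x → 0 ≤ B₁ t x) (hB₂ : ∀ t x, 0 ≤ x → 0 ≤ B₂ t x)
    (hd₁ : ∀ t x, 0 ≤ x → 0 ≤ d₁ t x) (hd₂ : ∀ t x, 0 ≤ x → 0 ≤ d₂ t x)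
    (hB₁p : ∀ t x, 0 ≤ x → B₁ (t + T) x = B₁ t x)
    (hB₂p : ∀ t x, 0 ≤ x → B₂ (t + T) x = B₂ t x)
    (hd₁p : ∀ t x, 0 ≤ x → d₁ (t + T) x = d₁ t x)
    (hd₂p : ∀ t x, 0 ≤ x → d₂ (t + T) x = d₂ t x)
    (θ : ℝ) (hθ : θ ∈ Set.Icc (0 : ℝ) 1)
    (Bθ dθ : ℝ → ℝ → ℝ)
    (hBθ : Bθ = fun t x => B₁ t x ^ θ * B₂ t x ^ (1 - θ))
    (hdθ : dθ = fun t x => θ * d₁ t x + (1 - θ) * d₂ t x)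
    (hne₁ : (subeigSet T B₁ d₁).Nonempty)
    (hne₂ : (subeigSet T B₂ d₂).Nonempty)
    (hbd₁ : BddBelow (subeigSet T B₁ d₁))
    (hbd₂ : BddBelow (subeigSet T B₂ d₂))
    (hbdθ : BddBelow (subeigSet T Bθ dθ)) :
    lambdaF T Bθ dθ ≤ θ * lambdaF T B₁ d₁ + (1 - θ) * lambdaF T B₂ d₂ :=
  lambdaF_convex_general T B₁ B₂ d₁ d₂ hB₁ hB₂ θ hθ Bθ dθ hBθ hdθ hne₁ hne₂ hbdθ
end
end

section
/- Let T > 0, I ≥ 1, and for k = 1, 2 let (B^k, d^k) be families of nonnegative coefficients for the I-phase renewal system, T-periodic in t. For such a family (B,d), let S(B,d) ⊆ ℝ be the set of μ ∈ ℝ admitting a system subeigenfunction for (B,d,μ), and define λ_F(B,d) = inf S(B,d). Fix θ ∈ [0,1] and set B^θ_{j→i}(t,x) = B^1_{j→i}(t,x)^θ · B^2_{j→i}(t,x)^{1−θ} and d^θ_i(t,x) = θ d^1_i(t,x) + (1−θ) d^2_i(t,x). Assume S(B^1,d^1) and S(B^2,d^2) are nonempty and that all three sets S(B^1,d^1), S(B^2,d^2),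 S(B^θ,d^θ) are bounded below. Then λ_F(B^θ, d^θ) ≤ θ λ_F(B^1, d^1) + (1−θ) λ_F(B^2, d^2); that is, the dominant Floquet eigenvalue is convex with respect to the death rates and geometrically convex with respect to the birth rates. -/
open MeasureTheory Real Finset

noncomputable section

/-- A system subeigenfunction for the `I`-phase renewal system with birth rates
`B j i` (from phase `j` to phase `i`), death rates `d j`, and value `μ`. -/
def IsSysSubeig (T : ℝ) (I : ℕ) (B : Fin I → Fin I → ℝ → ℝ → ℝ)
    (d : Fin I → ℝ → ℝ → ℝ) (μ : ℝ) (φ : Fin I → ℝ → ℝ → ℝ) : Prop :=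
  (∀ j t x, 0 ≤ x → 0 < φ j t x) ∧
  (∀ j t x, 0 ≤ x → DifferentiableAt ℝ (fun p : ℝ × ℝ => φ j p.1 p.2) (t, x)) ∧
  (∀ j t x, 0 ≤ x → φ j (t + T) x = φ j t x) ∧
  (∀ j t x, 0 ≤ x →
    (∑ i : Fin I, B j i t x * φ i t 0) ≤
      -(deriv (fun s => φ j s x) t) - deriv (fun y => φ j t y) x
        + (d j t x + μ) * φ j t x)

/-- The set of `μ` admitting a system subeigenfunction. -/
def sysSubeigSet (T : ℝ) (I : ℕ) (B : Fin I → Fin I → ℝ → ℝ → ℝ)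
    (d : Fin I → ℝ → ℝ → ℝ) : Set ℝ :=
  {μ : ℝ | ∃ φ : Fin I → ℝ → ℝ → ℝ, IsSysSubeig T I B d μ φ}

/-- The relaxed dominant Floquet eigenvalue of the `I`-phase renewal system. -/
def sysLambdaF (T : ℝ) (I : ℕ) (B : Fin I → Fin I → ℝ → ℝ → ℝ)
    (d : Fin I → ℝ → ℝ → ℝ) : ℝ :=
  sInf (sysSubeigSet T I B d)

/-!
If `φ₁, φ₂` are subeigenfunctions for `(B¹, d¹, μ₁)` and `(B², d², μ₂)`, then their weighted
geometric mean `φ₁ ^ θ * φ₂ ^ (1 - θ)` is one for `(Bᶿ, dᶿ, θ μ₁ + (1 - θ) μ₂)`: its logarithmic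
derivatives are the convex combinations of those of `φ₁` and `φ₂`, which makes the transport
operator exactly linear in the two inequalities, while the weighted AM-GM inequality bounds the
geometric-mean birth term by the same convex combination. Taking infima gives the convexity.
-/

lemma rpow_mul_rpow_one_sub_le {a b u v θ : ℝ} (ha : 0 ≤ a) (hb : 0 ≤ b) (hu : 0 < u)
    (hv : 0 < v) (h0 : 0 ≤ θ) (h1 : θ ≤ 1) :
    a ^ θ * b ^ (1 - θ) ≤ u ^ θ * v ^ (1 - θ) * (θ * (a / u) + (1 - θ) * (b / v)) :=
  calc a ^ θ * b ^ (1 - θ)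
      = u ^ θ * v ^ (1 - θ) * ((a / u) ^ θ * (b / v) ^ (1 - θ)) := by
        rw [Real.div_rpow ha hu.le, Real.div_rpow hb hv.le]
        field_simp
    _ ≤ u ^ θ * v ^ (1 - θ) * (θ * (a / u) + (1 - θ) * (b / v)) := by
        gcongr
        exact Real.geom_mean_le_arith_mean2_weighted h0 (by linarith)
          (div_nonneg ha hu.le) (div_nonneg hb hv.le) (by ring)

lemma sum_rpow_mul_rpow_one_sub_le {ι : Type*} (s : Finset ι) {a b : ι → ℝ}
    (ha : ∀ i, 0 ≤ a i) (hb : ∀ i, 0 ≤ b i) {u v θ : ℝ} (hu : 0 < u) (hv : 0 < v)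
    (h0 : 0 ≤ θ) (h1 : θ ≤ 1) :
    ∑ i ∈ s, a i ^ θ * b i ^ (1 - θ) ≤
      u ^ θ * v ^ (1 - θ) * (θ * ((∑ i ∈ s, a i) / u) + (1 - θ) * ((∑ i ∈ s, b i) / v)) :=
  calc ∑ i ∈ s, a i ^ θ * b i ^ (1 - θ)
      ≤ ∑ i ∈ s, u ^ θ * v ^ (1 - θ) * (θ * (a i / u) + (1 - θ) * (b i / v)) :=
        sum_le_sum fun i _ => rpow_mul_rpow_one_sub_le (ha i) (hb i) hu hv h0 h1
    _ = _ := by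
        rw [← mul_sum, sum_add_distrib, ← mul_sum, ← mul_sum, sum_div, sum_div]

lemma HasDerivAt.rpow_mul_rpow_one_sub {f g : ℝ → ℝ} {f' g' t : ℝ} (θ : ℝ)
    (hf : HasDerivAt f f' t) (hg : HasDerivAt g g' t) (hft : 0 < f t) (hgt : 0 < g t) :
    HasDerivAt (fun s => f s ^ θ * g s ^ (1 - θ))
      (f t ^ θ * g t ^ (1 - θ) * (θ * (f' / f t) + (1 - θ) * (g' / g t))) t := by
  refine ((hf.rpow_const (p := θ) (Or.inl hft.ne')).mul
    (hg.rpow_const (p := 1 - θ) (Or.inl hgt.ne'))).congr_deriv ?_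
  rw [Real.rpow_sub_one hft.ne', Real.rpow_sub_one hgt.ne']
  field_simp

def transportOp (φ : ℝ → ℝ → ℝ) (c t x : ℝ) : ℝ :=
  -(deriv (fun s => φ s x) t) - deriv (fun y => φ t y) x + c * φ t x

lemma transportOp_rpow_mul_rpow_one_sub {φ₁ φ₂ : ℝ → ℝ → ℝ} {t x : ℝ} (c₁ c₂ θ : ℝ)
    (h₁ : DifferentiableAt ℝ (fun p : ℝ × ℝ => φ₁ p.1 p.2) (t, x))
    (h₂ : DifferentiableAt ℝ (fun p : ℝ × ℝ => φ₂ p.1 p.2) (t, x))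
    (hpos₁ : 0 < φ₁ t x) (hpos₂ : 0 < φ₂ t x) :
    transportOp (fun s y => φ₁ s y ^ θ * φ₂ s y ^ (1 - θ)) (θ * c₁ + (1 - θ) * c₂) t x =
      φ₁ t x ^ θ * φ₂ t x ^ (1 - θ) *
        (θ * (transportOp φ₁ c₁ t x / φ₁ t x) + (1 - θ) * (transportOp φ₂ c₂ t x / φ₂ t x)) := by
  have slice_t (φ : ℝ → ℝ → ℝ) (h : DifferentiableAt ℝ (fun p : ℝ × ℝ => φ p.1 p.2) (t, x)) :
      HasDerivAt (fun s => φ s x) (deriv (fun s => φ s x) t) t :=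
    (h.comp t (f := fun s : ℝ => (s, x)) (by fun_prop)).hasDerivAt
  have slice_x (φ : ℝ → ℝ → ℝ) (h : DifferentiableAt ℝ (fun p : ℝ × ℝ => φ p.1 p.2) (t, x)) :
      HasDerivAt (fun y => φ t y) (deriv (fun y => φ t y) x) x :=
    (h.comp x (f := fun y : ℝ => (t, y)) (by fun_prop)).hasDerivAt
  unfold transportOp
  rw [((slice_t φ₁ h₁).rpow_mul_rpow_one_sub θ (slice_t φ₂ h₂) hpos₁ hpos₂).deriv,
    ((slice_x φ₁ h₁).rpow_mul_rpow_one_sub θ (slice_x φ₂ h₂) hpos₁ hpos₂).deriv]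
  field_simp
  ring

lemma IsSysSubeig.geomMean {T : ℝ} {I : ℕ} {B₁ B₂ : Fin I → Fin I → ℝ → ℝ → ℝ}
    {d₁ d₂ : Fin I → ℝ → ℝ → ℝ} {μ₁ μ₂ θ : ℝ} {φ₁ φ₂ : Fin I → ℝ → ℝ → ℝ}
    (hB₁ : ∀ j i t x, 0 ≤ x → 0 ≤ B₁ j i t x) (hB₂ : ∀ j i t x, 0 ≤ x → 0 ≤ B₂ j i t x)
    (h0 : 0 ≤ θ) (h1 : θ ≤ 1)
    (hφ₁ : IsSysSubeig T I B₁ d₁ μ₁ φ₁) (hφ₂ : IsSysSubeig T I B₂ d₂ μ₂ φ₂) :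
    IsSysSubeig T I (fun j i t x => B₁ j i t x ^ θ * B₂ j i t x ^ (1 - θ))
      (fun i t x => θ * d₁ i t x + (1 - θ) * d₂ i t x) (θ * μ₁ + (1 - θ) * μ₂)
      (fun j t x => φ₁ j t x ^ θ * φ₂ j t x ^ (1 - θ)) := by
  obtain ⟨hpos₁, hdiff₁, hper₁, hsub₁⟩ := hφ₁
  obtain ⟨hpos₂, hdiff₂, hper₂, hsub₂⟩ := hφ₂
  refine ⟨fun j t x hx => by have := hpos₁ j t x hx; have := hpos₂ j t x hx; positivity,
    fun j t x hx => ((hdiff₁ j t x hx).rpow_const (Or.inl (hpos₁ j t x hx).ne')).mul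
      ((hdiff₂ j t x hx).rpow_const (Or.inl (hpos₂ j t x hx).ne')),
    fun j t x hx => by simp only [hper₁ j t x hx, hper₂ j t x hx], fun j t x hx => ?_⟩
  have hu := hpos₁ j t x hx
  have hv := hpos₂ j t x hx
  have hbirth₁ (i : Fin I) : 0 ≤ B₁ j i t x * φ₁ i t 0 :=
    mul_nonneg (hB₁ j i t x hx) (hpos₁ i t 0 le_rfl).le
  have hbirth₂ (i : Fin I) : 0 ≤ B₂ j i t x * φ₂ i t 0 :=
    mul_nonneg (hB₂ j i t x hx) (hpos₂ i t 0 le_rfl).le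
  have hc : θ * d₁ j t x + (1 - θ) * d₂ j t x + (θ * μ₁ + (1 - θ) * μ₂) =
      θ * (d₁ j t x + μ₁) + (1 - θ) * (d₂ j t x + μ₂) := by ring
  change _ ≤ transportOp (fun s y => φ₁ j s y ^ θ * φ₂ j s y ^ (1 - θ)) _ t x
  rw [hc, transportOp_rpow_mul_rpow_one_sub _ _ θ (hdiff₁ j t x hx) (hdiff₂ j t x hx) hu hv]
  calc ∑ i, B₁ j i t x ^ θ * B₂ j i t x ^ (1 - θ) * (φ₁ i t 0 ^ θ * φ₂ i t 0 ^ (1 - θ))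
      = ∑ i, (B₁ j i t x * φ₁ i t 0) ^ θ * (B₂ j i t x * φ₂ i t 0) ^ (1 - θ) := by
        refine sum_congr rfl fun i _ => ?_
        rw [Real.mul_rpow (hB₁ j i t x hx) (hpos₁ i t 0 le_rfl).le,
          Real.mul_rpow (hB₂ j i t x hx) (hpos₂ i t 0 le_rfl).le]
        ring
    _ ≤ _ := sum_rpow_mul_rpow_one_sub_le univ hbirth₁ hbirth₂ hu hv h0 h1
    _ ≤ _ := by
        have := sub_nonneg.2 h1
        gcongr
        exacts [hsub₁ j t x hx, hsub₂ j t x hx]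

lemma le_convexComb_csInf {s₁ s₂ : Set ℝ} (h₁ : s₁.Nonempty) (h₂ : s₂.Nonempty) {θ c : ℝ}
    (h0 : 0 ≤ θ) (h1 : θ ≤ 1) (h : ∀ a ∈ s₁, ∀ b ∈ s₂, c ≤ θ * a + (1 - θ) * b) :
    c ≤ θ * sInf s₁ + (1 - θ) * sInf s₂ := by
  refine le_of_forall_pos_le_add fun ε hε => ?_
  obtain ⟨a, ha, haε⟩ := Real.lt_sInf_add_pos h₁ hε
  obtain ⟨b, hb, hbε⟩ := Real.lt_sInf_add_pos h₂ hε
  have ha' : θ * a ≤ θ * (sInf s₁ + ε) := mul_le_mul_of_nonneg_left haε.le h0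
  have hb' : (1 - θ) * b ≤ (1 - θ) * (sInf s₂ + ε) :=
    mul_le_mul_of_nonneg_left hbε.le (sub_nonneg.2 h1)
  linarith [h a ha b hb]

theorem sysLambdaF_convex_general
    (T : ℝ) (I : ℕ)
    (B₁ B₂ : Fin I → Fin I → ℝ → ℝ → ℝ) (d₁ d₂ : Fin I → ℝ → ℝ → ℝ)
    (hB₁ : ∀ j i t x, 0 ≤ x → 0 ≤ B₁ j i t x)
    (hB₂ : ∀ j i t x, 0 ≤ x → 0 ≤ B₂ j i t x)
    (θ : ℝ) (hθ : θ ∈ Set.Icc (0 : ℝ) 1)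
    (Bθ : Fin I → Fin I → ℝ → ℝ → ℝ) (dθ : Fin I → ℝ → ℝ → ℝ)
    (hBθ : Bθ = fun j i t x => B₁ j i t x ^ θ * B₂ j i t x ^ (1 - θ))
    (hdθ : dθ = fun i t x => θ * d₁ i t x + (1 - θ) * d₂ i t x)
    (hne₁ : (sysSubeigSet T I B₁ d₁).Nonempty)
    (hne₂ : (sysSubeigSet T I B₂ d₂).Nonempty)
    (hbdθ : BddBelow (sysSubeigSet T I Bθ dθ)) :
    sysLambdaF T I Bθ dθ ≤
      θ * sysLambdaF T I B₁ d₁ + (1 - θ) * sysLambdaF T I B₂ d₂ := by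
  subst hBθ hdθ
  refine le_convexComb_csInf hne₁ hne₂ hθ.1 hθ.2 fun μ₁ ⟨φ₁, hφ₁⟩ μ₂ ⟨φ₂, hφ₂⟩ => ?_
  exact csInf_le hbdθ ⟨_, hφ₁.geomMean hB₁ hB₂ hθ.1 hθ.2 hφ₂⟩

/-- The dominant Floquet eigenvalue of the `I`-phase renewal system is convex
with respect to the death rates and geometrically convex with respect to the
birth rates. -/
theorem sysLambdaF_convex
    (T : ℝ) (hT : 0 < T) (I : ℕ) (hI : 1 ≤ I)
    (B₁ B₂ : Fin I → Fin I → ℝ → ℝ → ℝ) (d₁ d₂ : Fin I → ℝ → ℝ → ℝ)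
    (hB₁ : ∀ j i t x, 0 ≤ x → 0 ≤ B₁ j i t x)
    (hB₂ : ∀ j i t x, 0 ≤ x → 0 ≤ B₂ j i t x)
    (hd₁ : ∀ i t x, 0 ≤ x → 0 ≤ d₁ i t x)
    (hd₂ : ∀ i t x, 0 ≤ x → 0 ≤ d₂ i t x)
    (hB₁p : ∀ j i t x, 0 ≤ x → B₁ j i (t + T) x = B₁ j i t x)
    (hB₂p : ∀ j i t x, 0 ≤ x → B₂ j i (t + T) x = B₂ j i t x)
    (hd₁p : ∀ i t x, 0 ≤ x → d₁ i (t + T) x = d₁ i t x)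
    (hd₂p : ∀ i t x, 0 ≤ x → d₂ i (t + T) x = d₂ i t x)
    (θ : ℝ) (hθ : θ ∈ Set.Icc (0 : ℝ) 1)
    (Bθ : Fin I → Fin I → ℝ → ℝ → ℝ) (dθ : Fin I → ℝ → ℝ → ℝ)
    (hBθ : Bθ = fun j i t x => B₁ j i t x ^ θ * B₂ j i t x ^ (1 - θ))
    (hdθ : dθ = fun i t x => θ * d₁ i t x + (1 - θ) * d₂ i t x)
    (hne₁ : (sysSubeigSet T I B₁ d₁).Nonempty)
    (hne₂ : (sysSubeigSet T I B₂ d₂).Nonempty)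
    (hbd₁ : BddBelow (sysSubeigSet T I B₁ d₁))
    (hbd₂ : BddBelow (sysSubeigSet T I B₂ d₂))
    (hbdθ : BddBelow (sysSubeigSet T I Bθ dθ)) :
    sysLambdaF T I Bθ dθ ≤
      θ * sysLambdaF T I B₁ d₁ + (1 - θ) * sysLambdaF T I B₂ d₂ :=
  sysLambdaF_convex_general T I B₁ B₂ d₁ d₂ hB₁ hB₂ θ hθ Bθ dθ hBθ hdθ hne₁ hne₂ hbdθ
end
end

section
/- Let T > 0, let B, d : ℝ × [0,∞) → ℝ be nonnegative and T-periodic in t, let μ ∈ ℝ and let φ be a positive T-periodic subeigenfunction for (B, d, μ). Let n : ℝ × [0,∞) → ℝ be nonnegative, differentiable in both variables, satisfying ∂_t n(t,x) + ∂_x n(t,x) + d(t,x) n(t,x) = 0 for all t, x ≥ 0 and the boundary condition n(t,0) = ∫₀^∞ B(t,x) n(t,x) dx. Assume for each t that x ↦ n(t,x)φ(t,x), x ↦ ∂_x(nφ)(t,x), x ↦ B(t,x)n(t,x) and x ↦ d(t,x)n(t,x)φ(t,x) are integrable on (0,∞), that n(t,x)φ(t,x) → 0 as x → ∞, and that the function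 F(t) = ∫₀^∞ n(t,x) φ(t,x) dx is differentiable with F′(t) = ∫₀^∞ ∂_t (n φ)(t,x) dx. Then for every t, the function t ↦ e^{−μ t} F(t) has nonpositive derivative: (d/dt)[ e^{−μ t} ∫₀^∞ n(t,x) φ(t,x) dx ] ≤ 0. -/
/-!
Along a characteristic `x = c + s`, the transport equation and the subeigenfunction inequality
give `d/ds [e^{-μs} (nφ)(s, c + s)] ≤ -e^{-μs} B(s, c + s) n(s, c + s) φ(s, 0) ≤ 0`.
Transporting the mass at time `t` to time `t + h` along characteristics, the nonnegative
difference quotients integrate to minus the difference quotient of `G(s) = e^{-μs} ∫ nφ` plus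
the average of `nφ` over the newborn strip `x ∈ (0, h)`, which tends to `e^{-μt} n(t,0) φ(t,0)`.
Fatou's lemma (needed because `∂ₜ(nφ)` is not known to be integrable) bounds the integral of the
pointwise limit, which is at least `e^{-μt} φ(t,0) ∫ B n = e^{-μt} φ(t,0) n(t,0)` by the
boundary condition, by `-G'(t) + e^{-μt} n(t,0) φ(t,0)`; hence `G'(t) ≤ 0`.
-/

open MeasureTheory Real

noncomputable section

open Filter Topology Set Function

theorem hasDerivAt_comp_diag {f : ℝ → ℝ → ℝ} {c s : ℝ}
    (hf : DifferentiableAt ℝ (uncurry f) (s, c + s)) :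
    HasDerivAt (fun b => f b (c + b))
      (deriv (fun b => f b (c + s)) s + deriv (fun y => f s y) (c + s)) s := by
  set L := fderiv ℝ (uncurry f) (s, c + s)
  have hL : HasFDerivAt (uncurry f) L (s, c + s) := hf.hasFDerivAt
  have h_fst : HasDerivAt (fun b => f b (c + s)) (L (1, 0)) s :=
    hL.comp_hasDerivAt_of_eq s ((hasDerivAt_id' s).prodMk (hasDerivAt_const s (c + s))) rfl
  have h_snd : HasDerivAt (fun y => f s y) (L (0, 1)) (c + s) :=
    hL.comp_hasDerivAt (c + s) ((hasDerivAt_const (c + s) s).prodMk (hasDerivAt_id' (c + s)))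
  have h_diag : HasDerivAt (fun b => f b (c + b)) (L (1, 1)) s :=
    hL.comp_hasDerivAt_of_eq s ((hasDerivAt_id' s).prodMk ((hasDerivAt_id' s).const_add c)) rfl
  rw [h_fst.deriv, h_snd.deriv, ← map_add, Prod.mk_add_mk, add_zero, zero_add]
  exact h_diag

theorem DifferentiableAt.partial_fst {f : ℝ → ℝ → ℝ} {s y : ℝ}
    (hf : DifferentiableAt ℝ (uncurry f) (s, y)) : DifferentiableAt ℝ (fun b => f b y) s :=
  (hf.hasFDerivAt.comp_hasDerivAt_of_eq s
    ((hasDerivAt_id' s).prodMk (hasDerivAt_const s y)) rfl).differentiableAt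

theorem DifferentiableAt.partial_snd {f : ℝ → ℝ → ℝ} {s y : ℝ}
    (hf : DifferentiableAt ℝ (uncurry f) (s, y)) : DifferentiableAt ℝ (fun z => f s z) y :=
  (hf.hasFDerivAt.comp_hasDerivAt_of_eq y
    ((hasDerivAt_const y s).prodMk (hasDerivAt_id' y)) rfl).differentiableAt

theorem integrableOn_Ioi_comp_add_right {f : ℝ → ℝ} {a : ℝ} (hf : IntegrableOn f (Ioi a)) :
    IntegrableOn (fun x => f (x + a)) (Ioi 0) := by
  have := (measurePreserving_add_right volume a).integrableOn_comp_preimage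
    (measurableEmbedding_addRight a) (f := f) (s := Ioi a)
  rw [preimage_add_const_Ioi, sub_self] at this
  exact this.mpr hf

theorem setIntegral_Ioi_comp_add_right (f : ℝ → ℝ) (a : ℝ) :
    ∫ x in Ioi 0, f (x + a) = ∫ x in Ioi a, f x := by
  have := (measurePreserving_add_right volume a).setIntegral_preimage_emb
    (measurableEmbedding_addRight a) f (Ioi a)
  rwa [preimage_add_const_Ioi, sub_self] at this

theorem tendsto_average_of_continuousAt {f : ℝ → ℝ → ℝ} {t : ℝ}
    (hf : ContinuousAt (uncurry f) (t, 0))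
    (hint : ∀ h, 0 < h → IntervalIntegrable (f (t + h)) volume 0 h) :
    Tendsto (fun h => h⁻¹ * ∫ y in (0)..h, f (t + h) y) (𝓝[>] 0) (𝓝 (f t 0)) := by
  rw [Metric.tendsto_nhdsWithin_nhds]
  intro ε hε
  obtain ⟨δ, hδ, hfδ⟩ := Metric.continuousAt_iff.mp hf (ε / 2) (half_pos hε)
  refine ⟨δ, hδ, fun h (hh : 0 < h) hhδ => ?_⟩
  rw [Real.dist_eq, sub_zero, abs_of_pos hh] at hhδ
  have hclose : ∀ y ∈ uIoc 0 h, ‖f (t + h) y - f t 0‖ ≤ ε / 2 := by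
    intro y hy
    rw [uIoc_of_le hh.le] at hy
    have hdist : dist (t + h, y) (t, 0) < δ := by
      rw [Prod.dist_eq, Real.dist_eq, Real.dist_eq, add_sub_cancel_left, sub_zero,
        abs_of_pos hh, abs_of_pos hy.1]
      exact max_lt hhδ (hy.2.trans_lt hhδ)
    exact (hfδ hdist).le
  have hbound := intervalIntegral.norm_integral_le_of_norm_le_const hclose
  rw [intervalIntegral.integral_sub (hint h hh) intervalIntegrable_const,
    intervalIntegral.integral_const, sub_zero, smul_eq_mul, abs_of_pos hh,
    Real.norm_eq_abs] at hbound
  calc dist (h⁻¹ * ∫ y in (0)..h, f (t + h) y) (f t 0)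
      = h⁻¹ * |(∫ y in (0)..h, f (t + h) y) - h * f t 0| := by
        have hsplit : h⁻¹ * (∫ y in (0)..h, f (t + h) y) - f t 0 =
            h⁻¹ * ((∫ y in (0)..h, f (t + h) y) - h * f t 0) := by
          field_simp
        rw [Real.dist_eq, hsplit, abs_mul, abs_of_pos (inv_pos.mpr hh)]
    _ ≤ h⁻¹ * (ε / 2 * h) := by gcongr
    _ < ε := by field_simp; linarith

theorem integral_le_of_tendsto_integral_of_nonneg {α : Type*} [MeasurableSpace α]
    {ν : Measure α} {q : ℕ → α → ℝ} {f g : α → ℝ} {L : ℝ}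
    (hq_int : ∀ k, Integrable (q k) ν) (hq_nonneg : ∀ k, 0 ≤ᵐ[ν] q k)
    (hq : ∀ᵐ x ∂ν, Tendsto (fun k => q k x) atTop (𝓝 (f x)))
    (hL : Tendsto (fun k => ∫ x, q k x ∂ν) atTop (𝓝 L))
    (hg_int : Integrable g ν) (hg_nonneg : 0 ≤ᵐ[ν] g) (hgf : g ≤ᵐ[ν] f) :
    ∫ x, g x ∂ν ≤ L := by
  have hL_nonneg : 0 ≤ L :=
    ge_of_tendsto' hL fun k => integral_nonneg_of_ae (hq_nonneg k)
  have fatou : ∫⁻ x, ENNReal.ofReal (f x) ∂ν ≤ ENNReal.ofReal L :=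
    calc ∫⁻ x, ENNReal.ofReal (f x) ∂ν
        = ∫⁻ x, liminf (fun k => ENNReal.ofReal (q k x)) atTop ∂ν :=
          lintegral_congr_ae <| hq.mono fun x hx => (ENNReal.tendsto_ofReal hx).liminf_eq.symm
      _ ≤ liminf (fun k => ∫⁻ x, ENNReal.ofReal (q k x) ∂ν) atTop :=
          lintegral_liminf_le' fun k => (hq_int k).aemeasurable.ennreal_ofReal
      _ = ENNReal.ofReal L := by
          simp_rw [← ofReal_integral_eq_lintegral_ofReal (hq_int _) (hq_nonneg _)]
          exact (ENNReal.tendsto_ofReal hL).liminf_eq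
  rw [← ENNReal.ofReal_le_ofReal_iff hL_nonneg,
    ofReal_integral_eq_lintegral_ofReal hg_int hg_nonneg]
  exact (lintegral_mono_ae (hgf.mono fun x hx => ENNReal.ofReal_le_ofReal hx)).trans fatou

section Characteristics

variable (μ : ℝ) (u : ℝ → ℝ → ℝ)

/-- The weighted density `e^{-μ s} u(s, x)` along the characteristic line `x = c + s`. -/
def charWeight (c s : ℝ) : ℝ := exp (-μ * s) * u s (c + s)

def weightedMass (s : ℝ) : ℝ := exp (-μ * s) * ∫ x in Ioi 0, u s x

def charQuotient (t h x : ℝ) : ℝ :=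
  h⁻¹ * (charWeight μ u (x - t) t - charWeight μ u (x - t) (t + h))

variable {μ u}

theorem hasDerivAt_charWeight {c s : ℝ} (hu : DifferentiableAt ℝ (uncurry u) (s, c + s)) :
    HasDerivAt (charWeight μ u c)
      (exp (-μ * s) * (-μ * u s (c + s) +
        (deriv (fun b => u b (c + s)) s + deriv (fun y => u s y) (c + s)))) s := by
  have hexp : HasDerivAt (fun s => exp (-μ * s)) (exp (-μ * s) * -μ) s := by
    simpa using ((hasDerivAt_id s).const_mul (-μ)).exp
  exact (hexp.mul (hasDerivAt_comp_diag hu)).congr_deriv (by ring)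

theorem charQuotient_eq (t h x : ℝ) :
    charQuotient μ u t h x =
      h⁻¹ * (exp (-μ * t) * u t x - exp (-μ * (t + h)) * u (t + h) (x + h)) := by
  rw [charQuotient, charWeight, charWeight, sub_add_cancel, show x - t + (t + h) = x + h by ring]

theorem tendsto_charQuotient {t x : ℝ} (hW : DifferentiableAt ℝ (charWeight μ u (x - t)) t) :
    Tendsto (fun h => charQuotient μ u t h x) (𝓝[>] 0)
      (𝓝 (-deriv (charWeight μ u (x - t)) t)) := by
  refine hW.hasDerivAt.tendsto_slope_zero_right.neg.congr fun h => ?_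
  rw [charQuotient, smul_eq_mul]
  ring

theorem integrableOn_charQuotient (hu : ∀ s, IntegrableOn (u s) (Ioi 0)) {t h : ℝ} (hh : 0 ≤ h) :
    IntegrableOn (charQuotient μ u t h) (Ioi 0) := by
  have hshift : IntegrableOn (fun x => u (t + h) (x + h)) (Ioi 0) :=
    integrableOn_Ioi_comp_add_right ((hu (t + h)).mono_set (Ioi_subset_Ioi hh))
  rw [funext (charQuotient_eq t h)]
  exact (((hu t).const_mul _).sub (hshift.const_mul _)).const_mul _

theorem integral_charQuotient (hu : ∀ s, IntegrableOn (u s) (Ioi 0)) {t h : ℝ} (hh : 0 ≤ h) :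
    ∫ x in Ioi 0, charQuotient μ u t h x =
      h⁻¹ * (weightedMass μ u t - weightedMass μ u (t + h)) +
        exp (-μ * (t + h)) * (h⁻¹ * ∫ y in (0)..h, u (t + h) y) := by
  have hshift : IntegrableOn (fun x => u (t + h) (x + h)) (Ioi 0) :=
    integrableOn_Ioi_comp_add_right ((hu (t + h)).mono_set (Ioi_subset_Ioi hh))
  have hsplit := intervalIntegral.integral_interval_add_Ioi (hu (t + h))
    ((hu (t + h)).mono_set (Ioi_subset_Ioi hh))
  simp_rw [charQuotient_eq]
  rw [integral_const_mul, integral_sub ((hu t).const_mul _) (hshift.const_mul _),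
    integral_const_mul, integral_const_mul, setIntegral_Ioi_comp_add_right (u (t + h)),
    weightedMass, weightedMass, ← hsplit]
  ring

theorem tendsto_integral_charQuotient (hu : ∀ s, IntegrableOn (u s) (Ioi 0)) {t : ℝ}
    (hM : DifferentiableAt ℝ (weightedMass μ u) t) (hu0 : ContinuousAt (uncurry u) (t, 0)) :
    Tendsto (fun h => ∫ x in Ioi 0, charQuotient μ u t h x) (𝓝[>] 0)
      (𝓝 (-deriv (weightedMass μ u) t + exp (-μ * t) * u t 0)) := by
  have hslope : Tendsto (fun h => h⁻¹ * (weightedMass μ u t - weightedMass μ u (t + h)))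
      (𝓝[>] 0) (𝓝 (-deriv (weightedMass μ u) t)) := by
    refine hM.hasDerivAt.tendsto_slope_zero_right.neg.congr fun h => ?_
    simp only [smul_eq_mul]
    ring
  have hexp : Tendsto (fun h => exp (-μ * (t + h))) (𝓝[>] 0) (𝓝 (exp (-μ * t))) := by
    have : Continuous fun h => exp (-μ * (t + h)) := by fun_prop
    simpa using (this.tendsto 0).mono_left nhdsWithin_le_nhds
  have havg := tendsto_average_of_continuousAt hu0 fun h hh =>
    (intervalIntegrable_iff_integrableOn_Ioc_of_le hh.le).mpr
      ((hu (t + h)).mono_set Ioc_subset_Ioi_self)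
  refine (hslope.add (hexp.mul havg)).congr' ?_
  filter_upwards [self_mem_nhdsWithin] with h hh
  exact (integral_charQuotient hu (le_of_lt hh)).symm

end Characteristics

structure IsNonnegTransportSolution (d n : ℝ → ℝ → ℝ) : Prop where
  nonneg : ∀ t x, 0 ≤ x → 0 ≤ n t x
  differentiableAt : ∀ t x, 0 ≤ x → DifferentiableAt ℝ (uncurry n) (t, x)
  pde : ∀ t x, 0 ≤ x → deriv (fun s => n s x) t + deriv (fun y => n t y) x + d t x * n t x = 0

section Renewal

variable {T μ : ℝ} {B d φ n : ℝ → ℝ → ℝ}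

theorem IsSubeig.deriv_charWeight_le (hφ : IsSubeig T B d μ φ) (hn : IsNonnegTransportSolution d n)
    {c s : ℝ} (hcs : 0 ≤ c + s) :
    deriv (charWeight μ (fun s x => n s x * φ s x) c) s ≤
      -(exp (-μ * s) * (B s (c + s) * n s (c + s) * φ s 0)) := by
  obtain ⟨-, hφdiff, -, hφsub⟩ := hφ
  have hnd := hn.differentiableAt s (c + s) hcs
  have hφd := hφdiff s (c + s) hcs
  rw [(hasDerivAt_charWeight (u := fun s x => n s x * φ s x) (hnd.mul hφd)).deriv,
    deriv_fun_mul hnd.partial_fst hφd.partial_fst,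
    deriv_fun_mul hnd.partial_snd hφd.partial_snd]
  have hsub := mul_le_mul_of_nonneg_left (hφsub s (c + s) hcs) (hn.nonneg s (c + s) hcs)
  have hflow := hn.pde s (c + s) hcs
  refine (mul_le_mul_of_nonneg_left ?_ (exp_pos _).le).trans_eq (mul_neg _ _)
  linear_combination hsub + φ s (c + s) * hflow

theorem IsSubeig.differentiableAt_charWeight (hφ : IsSubeig T B d μ φ)
    (hn : IsNonnegTransportSolution d n) {c s : ℝ} (hcs : 0 ≤ c + s) :
    DifferentiableAt ℝ (charWeight μ (fun s x => n s x * φ s x) c) s :=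
  (hasDerivAt_charWeight (u := fun s x => n s x * φ s x)
    ((hn.differentiableAt s _ hcs).mul (hφ.2.1 s _ hcs))).differentiableAt

theorem IsSubeig.antitoneOn_charWeight (hφ : IsSubeig T B d μ φ)
    (hB : ∀ t x, 0 ≤ x → 0 ≤ B t x) (hn : IsNonnegTransportSolution d n)
    (c : ℝ) : AntitoneOn (charWeight μ (fun s x => n s x * φ s x) c) (Ici (-c)) := by
  have hdiff : ∀ s ∈ Ici (-c), DifferentiableAt ℝ (charWeight μ (fun s x => n s x * φ s x) c) s :=
    fun s hs => hφ.differentiableAt_charWeight hn (neg_le_iff_add_nonneg'.mp hs)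
  refine antitoneOn_of_deriv_nonpos (convex_Ici _)
    (fun s hs => (hdiff s hs).continuousAt.continuousWithinAt)
    (fun s hs => (hdiff s (interior_subset hs)).differentiableWithinAt) fun s hs => ?_
  have hcs : 0 ≤ c + s := neg_le_iff_add_nonneg'.mp (interior_subset hs : s ∈ Ici (-c))
  refine (hφ.deriv_charWeight_le hn hcs).trans (neg_nonpos.mpr ?_)
  have := hB s _ hcs
  have := hn.nonneg s _ hcs
  have := hφ.1 s 0 le_rfl
  positivity

theorem IsSubeig.charQuotient_nonneg (hφ : IsSubeig T B d μ φ)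
    (hB : ∀ t x, 0 ≤ x → 0 ≤ B t x) (hn : IsNonnegTransportSolution d n)
    {t h x : ℝ} (hh : 0 ≤ h) (hx : 0 ≤ x) :
    0 ≤ charQuotient μ (fun s x => n s x * φ s x) t h x := by
  have hanti := hφ.antitoneOn_charWeight hB hn (x - t)
  have ht : t ∈ Ici (-(x - t)) := by rw [mem_Ici]; linarith
  have hth : t + h ∈ Ici (-(x - t)) := by rw [mem_Ici]; linarith
  exact mul_nonneg (inv_nonneg.mpr hh) (sub_nonneg.mpr (hanti ht hth (by linarith)))

theorem IsSubeig.integral_birth_le (hφ : IsSubeig T B d μ φ)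
    (hB : ∀ t x, 0 ≤ x → 0 ≤ B t x) (hn : IsNonnegTransportSolution d n)
    (hint : ∀ t, IntegrableOn (fun x => n t x * φ t x) (Ioi 0))
    (hBint : ∀ t, IntegrableOn (fun x => B t x * n t x) (Ioi 0)) {t : ℝ}
    (hM : DifferentiableAt ℝ (weightedMass μ fun s x => n s x * φ s x) t) :
    ∫ x in Ioi 0, exp (-μ * t) * (B t x * n t x * φ t 0) ≤
      -deriv (weightedMass μ fun s x => n s x * φ s x) t + exp (-μ * t) * (n t 0 * φ t 0) := by
  have hu0 : ContinuousAt (uncurry fun s x => n s x * φ s x) (t, 0) :=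
    ((hn.differentiableAt t 0 le_rfl).mul (hφ.2.1 t 0 le_rfl)).continuousAt
  have hseq : Tendsto (fun k : ℕ => 1 / ((k : ℝ) + 1)) atTop (𝓝[>] 0) :=
    tendsto_nhdsWithin_iff.mpr ⟨tendsto_one_div_add_atTop_nhds_zero_nat,
      Eventually.of_forall fun _ => mem_Ioi.mpr Nat.one_div_pos_of_nat⟩
  have hcurve : ∀ x ∈ Ioi (0 : ℝ), 0 ≤ x - t + t := fun x hx => by
    rw [sub_add_cancel]; exact le_of_lt hx
  refine integral_le_of_tendsto_integral_of_nonneg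
    (fun k => integrableOn_charQuotient hint (by positivity))
    (fun k => ae_restrict_of_forall_mem measurableSet_Ioi fun x hx =>
      hφ.charQuotient_nonneg hB hn (by positivity) (le_of_lt hx))
    (ae_restrict_of_forall_mem measurableSet_Ioi fun x hx =>
      (tendsto_charQuotient (hφ.differentiableAt_charWeight hn (hcurve x hx))).comp hseq)
    ((tendsto_integral_charQuotient hint hM hu0).comp hseq)
    (((hBint t).mul_const (φ t 0)).const_mul (exp (-μ * t)))
    (ae_restrict_of_forall_mem measurableSet_Ioi fun x hx => ?_)
    (ae_restrict_of_forall_mem measurableSet_Ioi fun x hx => ?_)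
  · have := hB t x (le_of_lt hx)
    have := hn.nonneg t x (le_of_lt hx)
    have := hφ.1 t 0 le_rfl
    positivity
  · have := hφ.deriv_charWeight_le hn (hcurve x hx)
    rw [sub_add_cancel] at this
    exact le_neg_of_le_neg this

end Renewal

theorem deriv_weighted_mass_nonpos_general
    (T : ℝ) (B d : ℝ → ℝ → ℝ)
    (hB : ∀ t x, 0 ≤ x → 0 ≤ B t x)
    (μ : ℝ) (φ : ℝ → ℝ → ℝ) (hφ : IsSubeig T B d μ φ)
    (n : ℝ → ℝ → ℝ)
    (hn0 : ∀ t x, 0 ≤ x → 0 ≤ n t x)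
    (hndiff : ∀ t x, 0 ≤ x → DifferentiableAt ℝ (fun p : ℝ × ℝ => n p.1 p.2) (t, x))
    (hpde : ∀ t x, 0 ≤ x →
      deriv (fun s => n s x) t + deriv (fun y => n t y) x + d t x * n t x = 0)
    (hbc : ∀ t, n t 0 = ∫ x in Set.Ioi (0 : ℝ), B t x * n t x)
    (hint₁ : ∀ t, IntegrableOn (fun x => n t x * φ t x) (Set.Ioi (0 : ℝ)))
    (hint₃ : ∀ t, IntegrableOn (fun x => B t x * n t x) (Set.Ioi (0 : ℝ)))
    (hF : ∀ t, HasDerivAt (fun s => ∫ x in Set.Ioi (0 : ℝ), n s x * φ s x)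
      (∫ x in Set.Ioi (0 : ℝ), deriv (fun s => n s x * φ s x) t) t) :
    ∀ t, deriv
      (fun s => Real.exp (-μ * s) * ∫ x in Set.Ioi (0 : ℝ), n s x * φ s x) t ≤ 0 := by
  intro t
  have hM : DifferentiableAt ℝ (weightedMass μ fun s x => n s x * φ s x) t :=
    (((hasDerivAt_id t).const_mul (-μ)).exp.mul (hF t)).differentiableAt
  have hbirth := hφ.integral_birth_le hB ⟨hn0, hndiff, hpde⟩ hint₁ hint₃ hM
  rw [integral_const_mul, integral_mul_const, ← hbc t] at hbirth
  change deriv (weightedMass μ fun s x => n s x * φ s x) t ≤ 0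
  linarith

/-- If `φ` is a positive `T`-periodic subeigenfunction for `(B, d, μ)` and `n`
is a nonnegative solution of the renewal equation
`∂ₜn + ∂ₓn + d n = 0`, `n(t,0) = ∫₀^∞ B(t,x) n(t,x) dx`, then (under the natural
integrability assumptions) `t ↦ e^{-μt} ∫₀^∞ n(t,x) φ(t,x) dx` has nonpositive
derivative. -/
theorem deriv_weighted_mass_nonpos
    (T : ℝ) (hT : 0 < T) (B d : ℝ → ℝ → ℝ)
    (hB : ∀ t x, 0 ≤ x → 0 ≤ B t x) (hd : ∀ t x, 0 ≤ x → 0 ≤ d t x)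
    (hBp : ∀ t x, 0 ≤ x → B (t + T) x = B t x)
    (hdp : ∀ t x, 0 ≤ x → d (t + T) x = d t x)
    (μ : ℝ) (φ : ℝ → ℝ → ℝ) (hφ : IsSubeig T B d μ φ)
    (n : ℝ → ℝ → ℝ)
    (hn0 : ∀ t x, 0 ≤ x → 0 ≤ n t x)
    (hndiff : ∀ t x, 0 ≤ x → DifferentiableAt ℝ (fun p : ℝ × ℝ => n p.1 p.2) (t, x))
    (hpde : ∀ t x, 0 ≤ x →
      deriv (fun s => n s x) t + deriv (fun y => n t y) x + d t x * n t x = 0)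
    (hbc : ∀ t, n t 0 = ∫ x in Set.Ioi (0 : ℝ), B t x * n t x)
    (hint₁ : ∀ t, IntegrableOn (fun x => n t x * φ t x) (Set.Ioi (0 : ℝ)))
    (hint₂ : ∀ t, IntegrableOn
      (fun x => deriv (fun y => n t y * φ t y) x) (Set.Ioi (0 : ℝ)))
    (hint₃ : ∀ t, IntegrableOn (fun x => B t x * n t x) (Set.Ioi (0 : ℝ)))
    (hint₄ : ∀ t, IntegrableOn (fun x => d t x * n t x * φ t x) (Set.Ioi (0 : ℝ)))
    (hlim : ∀ t, Filter.Tendsto (fun x => n t x * φ t x) Filter.atTop (nhds 0))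
    (hF : ∀ t, HasDerivAt (fun s => ∫ x in Set.Ioi (0 : ℝ), n s x * φ s x)
      (∫ x in Set.Ioi (0 : ℝ), deriv (fun s => n s x * φ s x) t) t) :
    ∀ t, deriv
      (fun s => Real.exp (-μ * s) * ∫ x in Set.Ioi (0 : ℝ), n s x * φ s x) t ≤ 0 :=
  deriv_weighted_mass_nonpos_general T B d hB μ φ hφ n hn0 hndiff hpde hbc hint₁ hint₃ hF
end
end

section
/- Let T > 0, let B, d : ℝ × [0,∞) → ℝ be nonnegative and T-periodic in t, let μ ∈ ℝ and let φ be a positive T-periodic subeigenfunction for (B, d, μ). Let n : ℝ × [0,∞) → ℝ be nonnegative, differentiable in both variables, satisfying ∂_t n + ∂_x n + d n = 0 and n(t,0) = ∫₀^∞ B(t,x) n(t,x) dx. Assume for each t that x ↦ n(t,x)φ(t,x), x ↦ ∂_x(nφ)(t,x), x ↦ B(t,x)n(t,x) and x ↦ d(t,x)n(t,x)φ(t,x) are integrable on (0,∞), that n(t,x)φ(t,x) → 0 as x → ∞, and that F(t) = ∫₀^∞ n(t,x) φ(t,x) dx is differentiable with F′(t) = ∫₀^∞ ∂_t (n φ)(t,x)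 dx. Then every solution grows slower than e^{μt} in the weighted space: for all t ≥ 0, ∫₀^∞ n(t,x) φ(t,x) dx ≤ e^{μ t} ∫₀^∞ n(0,x) φ(0,x) dx. -/
/-!
Along the characteristics `x = t + c` the weighted density `ψ = n φ` satisfies
`(∂ₜ + ∂ₓ) ψ ≤ μ ψ - B n φ(t, 0)`, by the equation for `n` and the subeigenfunction inequality
for `φ`. Integrating in `x`, the birth term `φ(t, 0) ∫ B n = φ(t, 0) n(t, 0)` cancels the
boundary flux `ψ(t, 0)`, so `F' ≤ μ F` for `F(t) = ∫ ψ(t, x) dx`, and `e^{-μt} F` is nonincreasing.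

The catch is that `F'(t)` is given as a Bochner integral of `∂ₜ ψ(t, ·)`, which is `0` when that
function is not integrable. Since `(∂ₜ + ∂ₓ) ψ ≤ |μ| ψ`, Gronwall along each characteristic bounds
the integral of the negative part of `(∂ₜ + ∂ₓ) ψ` by a multiple of the mass entering the
characteristic; integrating over all characteristics (Tonelli) shows that `∂ₜ ψ(t, ·)` is
integrable for almost every `t`. This suffices because `e^{-μt} F` is differentiable everywhere.
-/

open MeasureTheory Real

noncomputable section

open Set
open scoped ENNReal

theorem MeasureTheory.Integrable.of_le_of_lintegral_ofReal_neg_lt_top {α : Type*}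
    [MeasurableSpace α] {μ : Measure α} {f g : α → ℝ} (hf : AEStronglyMeasurable f μ)
    (hg : Integrable g μ) (hfg : f ≤ᵐ[μ] g) (hneg : ∫⁻ x, ENNReal.ofReal (-f x) ∂μ < ∞) :
    Integrable f μ := by
  refine ⟨hf, ?_⟩
  have hle : ∀ᵐ x ∂μ, ‖f x‖ₑ ≤ ‖g x‖ₑ + ENNReal.ofReal (-f x) := by
    filter_upwards [hfg] with x hx
    rw [Real.enorm_eq_ofReal_abs, Real.enorm_eq_ofReal_abs]
    rcases le_total 0 (f x) with h | h
    · exact le_add_right <| ENNReal.ofReal_le_ofReal <|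
        (abs_of_nonneg h).trans_le (hx.trans (le_abs_self _))
    · exact le_add_left (by rw [abs_of_nonpos h])
  calc ∫⁻ x, ‖f x‖ₑ ∂μ ≤ ∫⁻ x, ‖g x‖ₑ + ENNReal.ofReal (-f x) ∂μ := lintegral_mono_ae hle
    _ = ∫⁻ x, ‖g x‖ₑ ∂μ + ∫⁻ x, ENNReal.ofReal (-f x) ∂μ := lintegral_add_left' hg.1.enorm _
    _ < ∞ := ENNReal.add_lt_top.2 ⟨hg.2, hneg⟩

theorem le_of_hasDerivAt_of_ae_deriv_nonpos {G G' : ℝ → ℝ} {a b : ℝ} (hab : a ≤ b)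
    (hcont : ContinuousOn G (Icc a b)) (hderiv : ∀ t ∈ Ioo a b, HasDerivAt G (G' t) t)
    (hnonpos : ∀ᵐ t ∂volume.restrict (Ioo a b), G' t ≤ 0) : G b ≤ G a := by
  -- `G'` need not be integrable, but `max G' 0` dominates it and vanishes almost everywhere
  have hpos_zero : (fun t => max (G' t) 0) =ᵐ[volume.restrict (Icc a b)] 0 := by
    rw [← Measure.restrict_congr_set Ioo_ae_eq_Icc]
    filter_upwards [hnonpos] with t ht using max_eq_right ht
  have hsub_le := intervalIntegral.sub_le_integral_of_hasDeriv_right_of_le hab hcont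
    (fun t ht => (hderiv t ht).hasDerivWithinAt)
    ((integrable_zero _ _ _).congr hpos_zero.symm) (fun t _ => le_max_left (G' t) 0)
  rw [intervalIntegral.integral_of_le hab, ← integral_Icc_eq_integral_Ioc,
    integral_congr_ae hpos_zero, Pi.zero_def, integral_zero] at hsub_le
  linarith

theorem le_exp_mul_of_hasDerivAt_le_mul {ℓ ℓ' : ℝ → ℝ} {a b k : ℝ}
    (hcont : ContinuousOn ℓ (Icc a b)) (hderiv : ∀ u ∈ Ioo a b, HasDerivAt ℓ (ℓ' u) u)
    (hgrowth : ∀ u ∈ Ioo a b, ℓ' u ≤ k * ℓ u) {u : ℝ} (hu : u ∈ Icc a b) :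
    ℓ u ≤ exp (k * (u - a)) * ℓ a := by
  have hanti : AntitoneOn (fun v => exp (-k * v) * ℓ v) (Icc a b) := by
    refine antitoneOn_of_hasDerivWithinAt_nonpos (convex_Icc a b)
      ((continuous_const.mul continuous_id).rexp.continuousOn.mul hcont)
      (fun v hv => ?_) (f' := fun v => exp (-k * v) * (-k) * ℓ v + exp (-k * v) * ℓ' v) ?_
    · rw [interior_Icc] at hv
      exact ((((hasDerivAt_id' v).const_mul (-k)).exp.congr_deriv (by rw [mul_one])).mul
        (hderiv v hv)).hasDerivWithinAt
    · intro v hv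
      rw [interior_Icc] at hv
      have := hgrowth v hv
      have hexp := exp_pos (-k * v)
      nlinarith
  have h := hanti (left_mem_Icc.2 (hu.1.trans hu.2)) hu hu.1
  calc ℓ u = exp (k * u) * (exp (-k * u) * ℓ u) := by
        rw [← mul_assoc, ← exp_add, neg_mul, add_neg_cancel, exp_zero, one_mul]
    _ ≤ exp (k * u) * (exp (-k * a) * ℓ a) := by gcongr
    _ = exp (k * (u - a)) * ℓ a := by rw [← mul_assoc, ← exp_add]; ring_nf

theorem lintegral_ofReal_neg_deriv_le {ℓ ℓ' : ℝ → ℝ} {a b k : ℝ} (hab : a ≤ b) (hk : 0 ≤ k)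
    (hcont : ContinuousOn ℓ (Icc a b)) (hderiv : ∀ u ∈ Ioo a b, HasDerivAt ℓ (ℓ' u) u)
    (hnonneg : ∀ u ∈ Icc a b, 0 ≤ ℓ u) (hgrowth : ∀ u ∈ Ioo a b, ℓ' u ≤ k * ℓ u) :
    ∫⁻ u in Ioo a b, ENNReal.ofReal (-ℓ' u) ≤
      ENNReal.ofReal ((k * (b - a) * exp (k * (b - a)) + 1) * ℓ a) := by
  set K := exp (k * (b - a)) * ℓ a
  have hℓa := hnonneg a (left_mem_Icc.2 hab)
  have hK : 0 ≤ K := by positivity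
  have hℓK : ∀ u ∈ Icc a b, ℓ u ≤ K := fun u hu => by
    have h := le_exp_mul_of_hasDerivAt_le_mul hcont hderiv hgrowth hu
    have : exp (k * (u - a)) ≤ exp (k * (b - a)) := by gcongr; exact hu.2
    exact h.trans (mul_le_mul_of_nonneg_right this hℓa)
  -- `k K u - ℓ u` is nondecreasing, so its derivative is integrable
  have hderiv' : ∀ u ∈ Ioo a b, HasDerivAt (fun v => k * K * v - ℓ v) (k * K - ℓ' u) u :=
    fun u hu =>
      (((hasDerivAt_id' u).const_mul (k * K)).sub (hderiv u hu)).congr_deriv (by rw [mul_one])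
  have hnonneg' : ∀ u ∈ Ioo a b, 0 ≤ k * K - ℓ' u := fun u hu => by
    have := hgrowth u hu
    have := mul_le_mul_of_nonneg_left (hℓK u (Ioo_subset_Icc_self hu)) hk
    linarith
  have hint : IntegrableOn (fun u => k * K - ℓ' u) (Ioo a b) :=
    (intervalIntegral.integrableOn_deriv_of_nonneg
      ((continuousOn_const.mul continuousOn_id).sub hcont) hderiv' hnonneg').mono_set
      Ioo_subset_Ioc_self
  have hFTC : ∫ u in Ioo a b, (k * K - ℓ' u) = k * K * b - ℓ b - (k * K * a - ℓ a) := by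
    rw [← integral_Ioc_eq_integral_Ioo, ← intervalIntegral.integral_of_le hab]
    exact intervalIntegral.integral_eq_sub_of_hasDerivAt_of_le hab
      ((continuousOn_const.mul continuousOn_id).sub hcont) hderiv'
      (intervalIntegrable_iff_integrableOn_Ioo_of_le hab |>.2 hint)
  calc ∫⁻ u in Ioo a b, ENNReal.ofReal (-ℓ' u)
      ≤ ∫⁻ u in Ioo a b, ENNReal.ofReal (k * K - ℓ' u) :=
        lintegral_mono fun u => ENNReal.ofReal_le_ofReal (by nlinarith)
    _ = ENNReal.ofReal (∫ u in Ioo a b, (k * K - ℓ' u)) :=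
        (ofReal_integral_eq_lintegral_ofReal hint
          (ae_restrict_of_forall_mem measurableSet_Ioo hnonneg')).symm
    _ ≤ ENNReal.ofReal ((k * (b - a) * exp (k * (b - a)) + 1) * ℓ a) := by
        rw [hFTC]
        refine ENNReal.ofReal_le_ofReal ?_
        have := hnonneg b (right_mem_Icc.2 hab)
        simp only [K]
        nlinarith

theorem setLIntegral_lintegral_Ioi_eq_lintegral_diagonal {f : ℝ × ℝ → ℝ≥0∞}
    (hf : Measurable f) {s : Set ℝ} (hs : MeasurableSet s) :
    ∫⁻ t in s, ∫⁻ x in Ioi 0, f (t, x) = ∫⁻ c, ∫⁻ t in s ∩ Ioi (-c), f (t, t + c) := by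
  set S : Set (ℝ × ℝ) := {p | p.1 ∈ s ∧ 0 < p.1 + p.2}
  have hS : MeasurableSet S :=
    (measurable_fst hs).inter
      (measurableSet_lt measurable_const (measurable_fst.add measurable_snd))
  set F : ℝ × ℝ → ℝ≥0∞ := S.indicator fun p => f (p.1, p.1 + p.2)
  have hF : Measurable F :=
    (hf.comp (measurable_fst.prodMk (measurable_fst.add measurable_snd))).indicator hS
  calc ∫⁻ t in s, ∫⁻ x in Ioi 0, f (t, x) = ∫⁻ t, ∫⁻ c, F (t, c) := by
        rw [← lintegral_indicator hs]
        congr 1 with t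
        by_cases ht : t ∈ s
        · rw [indicator_of_mem ht, ← lintegral_indicator measurableSet_Ioi,
            ← lintegral_add_left_eq_self _ t]
          congr 1 with c
          simp [F, S, indicator, ht]
        · simp [F, S, ht]
    _ = ∫⁻ c, ∫⁻ t, F (t, c) := lintegral_lintegral_swap hF.aemeasurable
    _ = ∫⁻ c, ∫⁻ t in s ∩ Ioi (-c), f (t, t + c) := by
        congr 1 with c
        rw [← lintegral_indicator (hs.inter measurableSet_Ioi)]
        congr 1 with t
        have : t ∈ s ∩ Ioi (-c) ↔ t ∈ s ∧ 0 < t + c := by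
          rw [mem_inter_iff, mem_Ioi, neg_lt_iff_pos_add, add_comm]
        show S.indicator _ (t, c) = _
        by_cases h : t ∈ s ∧ 0 < t + c
        · rw [indicator_of_mem (show (t, c) ∈ S from h), indicator_of_mem (this.2 h)]
        · rw [indicator_of_notMem (show (t, c) ∉ S from h), indicator_of_notMem (mt this.1 h)]

-- Defined through `fderiv`, so it is Borel measurable for every `f` (`measurable_fderiv`).
def transportDeriv (f : ℝ × ℝ → ℝ) (p : ℝ × ℝ) : ℝ := fderiv ℝ f p (1, 1)

section Transport

variable {f : ℝ × ℝ → ℝ} {t x : ℝ}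

theorem measurable_transportDeriv (f : ℝ × ℝ → ℝ) : Measurable (transportDeriv f) :=
  measurable_fderiv_apply_const ℝ f _

theorem DifferentiableAt.hasDerivAt_fst_slice (hf : DifferentiableAt ℝ f (t, x)) :
    HasDerivAt (fun s => f (s, x)) (fderiv ℝ f (t, x) (1, 0)) t :=
  hf.hasFDerivAt.comp_hasDerivAt t ((hasDerivAt_id t).prodMk (hasDerivAt_const t x))

theorem DifferentiableAt.hasDerivAt_snd_slice (hf : DifferentiableAt ℝ f (t, x)) :
    HasDerivAt (fun y => f (t, y)) (fderiv ℝ f (t, x) (0, 1)) x :=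
  hf.hasFDerivAt.comp_hasDerivAt x ((hasDerivAt_const x t).prodMk (hasDerivAt_id x))

theorem transportDeriv_eq_deriv_add_deriv (hf : DifferentiableAt ℝ f (t, x)) :
    transportDeriv f (t, x) = deriv (fun s => f (s, x)) t + deriv (fun y => f (t, y)) x := by
  rw [hf.hasDerivAt_fst_slice.deriv, hf.hasDerivAt_snd_slice.deriv, ← map_add]
  simp [transportDeriv]

theorem DifferentiableAt.hasDerivAt_transportDeriv {c : ℝ}
    (hf : DifferentiableAt ℝ f (t, t + c)) :
    HasDerivAt (fun u => f (u, u + c)) (transportDeriv f (t, t + c)) t :=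
  hf.hasFDerivAt.comp_hasDerivAt t ((hasDerivAt_id t).prodMk ((hasDerivAt_id t).add_const c))

end Transport

structure IsNonnegTransportSolution_s5 (d n : ℝ → ℝ → ℝ) : Prop where
  nonneg : ∀ t x, 0 ≤ x → 0 ≤ n t x
  differentiableAt : ∀ t x, 0 ≤ x → DifferentiableAt ℝ (fun p : ℝ × ℝ => n p.1 p.2) (t, x)
  pde : ∀ t x, 0 ≤ x → deriv (fun s => n s x) t + deriv (fun y => n t y) x + d t x * n t x = 0

def weightedDensity (n φ : ℝ → ℝ → ℝ) (p : ℝ × ℝ) : ℝ := n p.1 p.2 * φ p.1 p.2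

section Renewal

variable {T μ : ℝ} {B d n φ : ℝ → ℝ → ℝ}

theorem IsSubeig.differentiableAt_weightedDensity (hφ : IsSubeig T B d μ φ)
    (hn : IsNonnegTransportSolution_s5 d n) {t x : ℝ} (hx : 0 ≤ x) :
    DifferentiableAt ℝ (weightedDensity n φ) (t, x) :=
  (hn.differentiableAt t x hx).mul (hφ.2.1 t x hx)

theorem IsSubeig.transportDeriv_weightedDensity_le (hφ : IsSubeig T B d μ φ)
    (hn : IsNonnegTransportSolution_s5 d n) {t x : ℝ} (hx : 0 ≤ x) :
    transportDeriv (weightedDensity n φ) (t, x) ≤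
      μ * (n t x * φ t x) - B t x * n t x * φ t 0 := by
  have hnt := hn.differentiableAt t x hx
  have hφ' := hφ.2.1 t x hx
  have hderiv_t : deriv (fun s => n s x * φ s x) t =
      deriv (fun s => n s x) t * φ t x + n t x * deriv (fun s => φ s x) t :=
    deriv_mul hnt.hasDerivAt_fst_slice.differentiableAt hφ'.hasDerivAt_fst_slice.differentiableAt
  have hderiv_x : deriv (fun y => n t y * φ t y) x =
      deriv (fun y => n t y) x * φ t x + n t x * deriv (fun y => φ t y) x :=
    deriv_mul hnt.hasDerivAt_snd_slice.differentiableAt hφ'.hasDerivAt_snd_slice.differentiableAt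
  have hsub := mul_le_mul_of_nonneg_left (hφ.2.2.2 t x hx) (hn.nonneg t x hx)
  have hpde' := congrArg (· * φ t x) (hn.pde t x hx)
  simp only [zero_mul] at hpde'
  rw [transportDeriv_eq_deriv_add_deriv (hφ.differentiableAt_weightedDensity hn hx)]
  change deriv (fun s => n s x * φ s x) t + deriv (fun y => n t y * φ t y) x ≤ _
  rw [hderiv_t, hderiv_x]
  linarith

theorem IsSubeig.transportDeriv_weightedDensity_le_abs_mul (hφ : IsSubeig T B d μ φ)
    (hB : ∀ t x, 0 ≤ x → 0 ≤ B t x) (hn : IsNonnegTransportSolution_s5 d n)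
    {t x : ℝ} (hx : 0 ≤ x) :
    transportDeriv (weightedDensity n φ) (t, x) ≤ |μ| * weightedDensity n φ (t, x) := by
  have hψ : 0 ≤ n t x * φ t x := mul_nonneg (hn.nonneg t x hx) (hφ.1 t x hx).le
  have hbirth : 0 ≤ B t x * n t x * φ t 0 :=
    mul_nonneg (mul_nonneg (hB t x hx) (hn.nonneg t x hx)) (hφ.1 t 0 le_rfl).le
  have := hφ.transportDeriv_weightedDensity_le (t := t) hn hx
  have := mul_le_mul_of_nonneg_right (le_abs_self μ) hψ
  change _ ≤ |μ| * (n t x * φ t x)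
  linarith

theorem IsSubeig.integral_deriv_le_mul_integral_of_lintegral_lt_top (hφ : IsSubeig T B d μ φ)
    (hn : IsNonnegTransportSolution_s5 d n) {t : ℝ} (hbc : n t 0 = ∫ x in Ioi (0 : ℝ), B t x * n t x)
    (hint₁ : IntegrableOn (fun x => n t x * φ t x) (Ioi 0))
    (hint₂ : IntegrableOn (fun x => deriv (fun y => n t y * φ t y) x) (Ioi 0))
    (hint₃ : IntegrableOn (fun x => B t x * n t x) (Ioi 0))
    (hlim : Filter.Tendsto (fun x => n t x * φ t x) Filter.atTop (nhds 0))
    (hgood :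
      ∫⁻ x in Ioi 0, ENNReal.ofReal (-transportDeriv (weightedDensity n φ) (t, x)) < ∞) :
    ∫ x in Ioi (0 : ℝ), deriv (fun s => n s x * φ s x) t ≤
      μ * ∫ x in Ioi (0 : ℝ), n t x * φ t x := by
  set D := fun x => transportDeriv (weightedDensity n φ) (t, x)
  have hdiff : ∀ x, 0 ≤ x → DifferentiableAt ℝ (weightedDensity n φ) (t, x) :=
    fun x hx => hφ.differentiableAt_weightedDensity hn hx
  have hupper : ∀ x ∈ Ioi (0 : ℝ), D x ≤ μ * (n t x * φ t x) - B t x * n t x * φ t 0 :=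
    fun x hx => hφ.transportDeriv_weightedDensity_le hn (le_of_lt hx)
  have hgint : IntegrableOn (fun x => μ * (n t x * φ t x) - B t x * n t x * φ t 0) (Ioi 0) :=
    (hint₁.const_mul μ).sub (hint₃.mul_const _)
  have hDint : IntegrableOn D (Ioi 0) :=
    Integrable.of_le_of_lintegral_ofReal_neg_lt_top
      ((measurable_transportDeriv _).comp measurable_prodMk_left).aestronglyMeasurable hgint
      (ae_restrict_of_forall_mem measurableSet_Ioi hupper) hgood
  have hsplit : ∀ x ∈ Ioi (0 : ℝ),
      deriv (fun s => n s x * φ s x) t = D x - deriv (fun y => n t y * φ t y) x := fun x hx => by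
    simp only [D, transportDeriv_eq_deriv_add_deriv (hdiff x (le_of_lt hx))]
    exact (add_sub_cancel_right _ _).symm
  have hboundary : ∫ x in Ioi (0 : ℝ), deriv (fun y => n t y * φ t y) x = -(n t 0 * φ t 0) := by
    rw [integral_Ioi_of_hasDerivAt_of_tendsto' (f := fun y => n t y * φ t y)
      (f' := fun x => deriv (fun y => n t y * φ t y) x)
      (fun x hx => (hdiff x hx).hasDerivAt_snd_slice.differentiableAt.hasDerivAt) hint₂ hlim,
      zero_sub]
  calc ∫ x in Ioi (0 : ℝ), deriv (fun s => n s x * φ s x) t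
      = ∫ x in Ioi (0 : ℝ), (D x - deriv (fun y => n t y * φ t y) x) :=
        setIntegral_congr_fun measurableSet_Ioi hsplit
    _ = (∫ x in Ioi (0 : ℝ), D x) - ∫ x in Ioi (0 : ℝ), deriv (fun y => n t y * φ t y) x :=
        integral_sub hDint hint₂
    _ ≤ (∫ x in Ioi (0 : ℝ), (μ * (n t x * φ t x) - B t x * n t x * φ t 0)) -
          ∫ x in Ioi (0 : ℝ), deriv (fun y => n t y * φ t y) x :=
        sub_le_sub_right (setIntegral_mono_on hDint hgint measurableSet_Ioi hupper) _
    _ = μ * ∫ x in Ioi (0 : ℝ), n t x * φ t x := by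
        rw [integral_sub (hint₁.const_mul μ) (hint₃.mul_const _), integral_const_mul,
          integral_mul_const, ← hbc, hboundary]
        ring

theorem IsSubeig.lintegral_neg_transportDeriv_characteristic_le (hφ : IsSubeig T B d μ φ)
    (hB : ∀ t x, 0 ≤ x → 0 ≤ B t x) (hn : IsNonnegTransportSolution_s5 d n)
    {a b c : ℝ} (hab : a ≤ b) (hac : 0 ≤ a + c) :
    ∫⁻ t in Ioo a b, ENNReal.ofReal (-transportDeriv (weightedDensity n φ) (t, t + c)) ≤
      ENNReal.ofReal ((|μ| * (b - a) * exp (|μ| * (b - a)) + 1) *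
        weightedDensity n φ (a, a + c)) := by
  have hx : ∀ u ∈ Icc a b, 0 ≤ u + c := fun u hu => by linarith [hu.1]
  have hderiv : ∀ u ∈ Icc a b, HasDerivAt (fun u => weightedDensity n φ (u, u + c))
      (transportDeriv (weightedDensity n φ) (u, u + c)) u := fun u hu =>
    (hφ.differentiableAt_weightedDensity hn (hx u hu)).hasDerivAt_transportDeriv
  refine lintegral_ofReal_neg_deriv_le hab (abs_nonneg μ)
    (fun u hu => (hderiv u hu).continuousAt.continuousWithinAt)
    (fun u hu => hderiv u (Ioo_subset_Icc_self hu))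
    (fun u hu => mul_nonneg (hn.nonneg _ _ (hx u hu)) (hφ.1 _ _ (hx u hu)).le)
    (fun u hu => hφ.transportDeriv_weightedDensity_le_abs_mul hB hn
      (hx u (Ioo_subset_Icc_self hu)))

theorem IsSubeig.setLIntegral_lintegral_neg_transportDeriv_lt_top (hφ : IsSubeig T B d μ φ)
    (hB : ∀ t x, 0 ≤ x → 0 ≤ B t x) (hn : IsNonnegTransportSolution_s5 d n)
    (hint₀ : IntegrableOn (fun x => n 0 x * φ 0 x) (Ioi 0)) {t₀ : ℝ} (ht₀ : 0 ≤ t₀) :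
    ∫⁻ t in Ioo 0 t₀, ∫⁻ x in Ioi 0,
      ENNReal.ofReal (-transportDeriv (weightedDensity n φ) (t, x)) < ∞ := by
  set C := |μ| * t₀ * exp (|μ| * t₀) + 1
  -- `ψ` where the characteristic `x = t + c` enters the quadrant `t > 0, x > 0`
  set inflow : ℝ → ℝ := fun c => weightedDensity n φ (max 0 (-c), max 0 (-c) + c)
  have hchar : ∀ c, ∫⁻ t in Ioo 0 t₀ ∩ Ioi (-c),
      ENNReal.ofReal (-transportDeriv (weightedDensity n φ) (t, t + c)) ≤
        (Ioi (-t₀)).indicator (fun c => ENNReal.ofReal (C * inflow c)) c := by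
    intro c
    rw [Ioo_inter_Ioi]
    by_cases hc : c ∈ Ioi (-t₀)
    · have ha : max 0 (-c) ≤ t₀ := max_le ht₀ (by linarith [mem_Ioi.1 hc])
      rw [indicator_of_mem hc]
      have hac : 0 ≤ max 0 (-c) + c := by linarith [le_max_right 0 (-c)]
      refine (hφ.lintegral_neg_transportDeriv_characteristic_le hB hn ha hac).trans ?_
      have hinflow : 0 ≤ inflow c := mul_nonneg (hn.nonneg _ _ hac) (hφ.1 _ _ hac).le
      have hlen : t₀ - max 0 (-c) ≤ t₀ := by linarith [le_max_left 0 (-c)]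
      gcongr
      simp only [C]
      gcongr
    · rw [indicator_of_notMem hc]
      rw [mem_Ioi, not_lt] at hc
      rw [Ioo_eq_empty (not_lt.2 (le_max_of_le_right (by linarith))), Measure.restrict_empty,
        lintegral_zero_measure]
  have hinflow : ∫⁻ c in Ioi (-t₀), ENNReal.ofReal (C * inflow c) < ∞ := by
    have hcont : Continuous fun c => C * weightedDensity n φ (-c, 0) :=
      continuous_const.mul <| continuous_iff_continuousAt.2 fun c =>
        ContinuousAt.comp (x := c) (g := weightedDensity n φ)
          (hφ.differentiableAt_weightedDensity hn le_rfl).continuousAt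
          (continuous_neg.prodMk continuous_const).continuousAt
    have hboundary : EqOn (fun c => ENNReal.ofReal (C * inflow c))
        (fun c => ENNReal.ofReal (C * weightedDensity n φ (-c, 0))) (Ioc (-t₀) 0) :=
      fun c hc => by simp only [inflow, max_eq_right (neg_nonneg.2 hc.2), neg_add_cancel]
    have hinitial : EqOn (fun c => ENNReal.ofReal (C * inflow c))
        (fun c => ENNReal.ofReal (C * (n 0 c * φ 0 c))) (Ioi 0) :=
      fun c hc => by
        simp only [inflow, weightedDensity, max_eq_left (neg_nonpos.2 (le_of_lt (mem_Ioi.1 hc))),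
          zero_add]
    rw [← Ioc_union_Ioi_eq_Ioi (neg_nonpos.2 ht₀)]
    refine (lintegral_union_le _ _ _).trans_lt (ENNReal.add_lt_top.2 ⟨?_, ?_⟩)
    · rw [setLIntegral_congr_fun measurableSet_Ioc hboundary]
      exact (hcont.integrableOn_Icc.mono_set Ioc_subset_Icc_self).lintegral_lt_top
    · rw [setLIntegral_congr_fun measurableSet_Ioi hinitial]
      exact (hint₀.const_mul C).lintegral_lt_top
  calc ∫⁻ t in Ioo 0 t₀, ∫⁻ x in Ioi 0,
        ENNReal.ofReal (-transportDeriv (weightedDensity n φ) (t, x))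
      = ∫⁻ c, ∫⁻ t in Ioo 0 t₀ ∩ Ioi (-c),
          ENNReal.ofReal (-transportDeriv (weightedDensity n φ) (t, t + c)) :=
        setLIntegral_lintegral_Ioi_eq_lintegral_diagonal
          (measurable_transportDeriv _).neg.ennreal_ofReal measurableSet_Ioo
    _ ≤ ∫⁻ c, (Ioi (-t₀)).indicator (fun c => ENNReal.ofReal (C * inflow c)) c :=
        lintegral_mono hchar
    _ < ∞ := by rwa [lintegral_indicator measurableSet_Ioi]

theorem IsSubeig.ae_lintegral_neg_transportDeriv_lt_top (hφ : IsSubeig T B d μ φ)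
    (hB : ∀ t x, 0 ≤ x → 0 ≤ B t x) (hn : IsNonnegTransportSolution_s5 d n)
    (hint₀ : IntegrableOn (fun x => n 0 x * φ 0 x) (Ioi 0)) {t₀ : ℝ} (ht₀ : 0 ≤ t₀) :
    ∀ᵐ t ∂volume.restrict (Ioo 0 t₀),
      ∫⁻ x in Ioi 0, ENNReal.ofReal (-transportDeriv (weightedDensity n φ) (t, x)) < ∞ :=
  ae_lt_top ((measurable_transportDeriv _).neg.ennreal_ofReal.lintegral_prod_right')
    (hφ.setLIntegral_lintegral_neg_transportDeriv_lt_top hB hn hint₀ ht₀).ne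

end Renewal

theorem weighted_mass_le_exp_growth_general
    (T : ℝ) (B d : ℝ → ℝ → ℝ)
    (hB : ∀ t x, 0 ≤ x → 0 ≤ B t x)
    (μ : ℝ) (φ : ℝ → ℝ → ℝ) (hφ : IsSubeig T B d μ φ)
    (n : ℝ → ℝ → ℝ)
    (hn0 : ∀ t x, 0 ≤ x → 0 ≤ n t x)
    (hndiff : ∀ t x, 0 ≤ x → DifferentiableAt ℝ (fun p : ℝ × ℝ => n p.1 p.2) (t, x))
    (hpde : ∀ t x, 0 ≤ x →
      deriv (fun s => n s x) t + deriv (fun y => n t y) x + d t x * n t x = 0)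
    (hbc : ∀ t, n t 0 = ∫ x in Set.Ioi (0 : ℝ), B t x * n t x)
    (hint₁ : ∀ t, IntegrableOn (fun x => n t x * φ t x) (Set.Ioi (0 : ℝ)))
    (hint₂ : ∀ t, IntegrableOn
      (fun x => deriv (fun y => n t y * φ t y) x) (Set.Ioi (0 : ℝ)))
    (hint₃ : ∀ t, IntegrableOn (fun x => B t x * n t x) (Set.Ioi (0 : ℝ)))
    (hlim : ∀ t, Filter.Tendsto (fun x => n t x * φ t x) Filter.atTop (nhds 0))
    (hF : ∀ t, HasDerivAt (fun s => ∫ x in Set.Ioi (0 : ℝ), n s x * φ s x)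
      (∫ x in Set.Ioi (0 : ℝ), deriv (fun s => n s x * φ s x) t) t) :
    ∀ t, 0 ≤ t →
      (∫ x in Set.Ioi (0 : ℝ), n t x * φ t x) ≤
        Real.exp (μ * t) * ∫ x in Set.Ioi (0 : ℝ), n 0 x * φ 0 x := by
  intro t₀ ht₀
  set F := fun s => ∫ x in Ioi (0 : ℝ), n s x * φ s x
  set F' := fun s => ∫ x in Ioi (0 : ℝ), deriv (fun s => n s x * φ s x) s
  have hF' : ∀ s, HasDerivAt F (F' s) s := hF
  have hn : IsNonnegTransportSolution_s5 d n := ⟨hn0, hndiff, hpde⟩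
  have hG : ∀ s,
      HasDerivAt (fun s => exp (-μ * s) * F s) (exp (-μ * s) * (F' s - μ * F s)) s :=
    fun s => ((((hasDerivAt_id' s).const_mul (-μ)).exp).mul (hF' s)).congr_deriv (by ring)
  have hgood : ∀ᵐ s ∂volume.restrict (Ioo 0 t₀), F' s ≤ μ * F s :=
    (hφ.ae_lintegral_neg_transportDeriv_lt_top hB hn (hint₁ 0) ht₀).mono
      fun s hs => hφ.integral_deriv_le_mul_integral_of_lintegral_lt_top hn (hbc s)
        (hint₁ s) (hint₂ s) (hint₃ s) (hlim s) hs
  have hdecay : exp (-μ * t₀) * F t₀ ≤ exp (-μ * 0) * F 0 :=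
    le_of_hasDerivAt_of_ae_deriv_nonpos ht₀ (fun s _ => (hG s).continuousAt.continuousWithinAt)
      (fun s _ => hG s) (hgood.mono fun s hs =>
        mul_nonpos_of_nonneg_of_nonpos (exp_pos _).le (sub_nonpos.2 hs))
  calc F t₀ = exp (μ * t₀) * (exp (-μ * t₀) * F t₀) := by
        rw [← mul_assoc, ← exp_add, neg_mul, add_neg_cancel, exp_zero, one_mul]
    _ ≤ exp (μ * t₀) * F 0 := by
        gcongr
        simpa using hdecay

/-- If `φ` is a positive `T`-periodic subeigenfunction for `(B, d, μ)` and `n`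
is a nonnegative solution of the renewal equation
`∂ₜn + ∂ₓn + d n = 0`, `n(t,0) = ∫₀^∞ B(t,x) n(t,x) dx`, then (under the natural
integrability assumptions) every solution grows slower than `e^{μt}` in the
weighted space: `∫₀^∞ n(t,x) φ(t,x) dx ≤ e^{μt} ∫₀^∞ n(0,x) φ(0,x) dx` for `t ≥ 0`. -/
theorem weighted_mass_le_exp_growth
    (T : ℝ) (hT : 0 < T) (B d : ℝ → ℝ → ℝ)
    (hB : ∀ t x, 0 ≤ x → 0 ≤ B t x) (hd : ∀ t x, 0 ≤ x → 0 ≤ d t x)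
    (hBp : ∀ t x, 0 ≤ x → B (t + T) x = B t x)
    (hdp : ∀ t x, 0 ≤ x → d (t + T) x = d t x)
    (μ : ℝ) (φ : ℝ → ℝ → ℝ) (hφ : IsSubeig T B d μ φ)
    (n : ℝ → ℝ → ℝ)
    (hn0 : ∀ t x, 0 ≤ x → 0 ≤ n t x)
    (hndiff : ∀ t x, 0 ≤ x → DifferentiableAt ℝ (fun p : ℝ × ℝ => n p.1 p.2) (t, x))
    (hpde : ∀ t x, 0 ≤ x →
      deriv (fun s => n s x) t + deriv (fun y => n t y) x + d t x * n t x = 0)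
    (hbc : ∀ t, n t 0 = ∫ x in Set.Ioi (0 : ℝ), B t x * n t x)
    (hint₁ : ∀ t, IntegrableOn (fun x => n t x * φ t x) (Set.Ioi (0 : ℝ)))
    (hint₂ : ∀ t, IntegrableOn
      (fun x => deriv (fun y => n t y * φ t y) x) (Set.Ioi (0 : ℝ)))
    (hint₃ : ∀ t, IntegrableOn (fun x => B t x * n t x) (Set.Ioi (0 : ℝ)))
    (hint₄ : ∀ t, IntegrableOn (fun x => d t x * n t x * φ t x) (Set.Ioi (0 : ℝ)))
    (hlim : ∀ t, Filter.Tendsto (fun x => n t x * φ t x) Filter.atTop (nhds 0))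
    (hF : ∀ t, HasDerivAt (fun s => ∫ x in Set.Ioi (0 : ℝ), n s x * φ s x)
      (∫ x in Set.Ioi (0 : ℝ), deriv (fun s => n s x * φ s x) t) t) :
    ∀ t, 0 ≤ t →
      (∫ x in Set.Ioi (0 : ℝ), n t x * φ t x) ≤
        Real.exp (μ * t) * ∫ x in Set.Ioi (0 : ℝ), n 0 x * φ 0 x :=
  weighted_mass_le_exp_growth_general T B d hB μ φ hφ n hn0 hndiff hpde hbc hint₁ hint₂ hint₃ hlim
    hF
end
end

section
/- Let T > 0, let B, d : ℝ × [0,∞) → ℝ be nonnegative and T-periodic in t, and let λ ∈ ℝ. Let φ : ℝ × [0,∞) → ℝ be everywhere positive, differentiable in both variables, T-periodic in t, satisfying the dual eigenvalue equation with equality: −∂_t φ(t,x) − ∂_x φ(t,x) + (d(t,x) + λ) φ(t,x) = B(t,x) φ(t,0) for all t ∈ ℝ, x ≥ 0. Let n : ℝ × [0,∞) → ℝ be nonnegative, differentiable in both variables, satisfying ∂_t n + ∂_x n + d n = 0 and n(t,0) = ∫₀^∞ B(t,x) n(t,x) dx. Assume for each t that x ↦ n(t,x)φ(t,x), x ↦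 ∂_x(nφ)(t,x), x ↦ B(t,x)n(t,x) and x ↦ d(t,x)n(t,x)φ(t,x) are integrable on (0,∞), that n(t,x)φ(t,x) → 0 as x → ∞, and that F(t) = ∫₀^∞ n(t,x) φ(t,x) dx is differentiable with F′(t) = ∫₀^∞ ∂_t (n φ)(t,x) dx. Then solutions grow exactly like e^{λt} in the weighted space: for all t, ∫₀^∞ n(t,x) φ(t,x) dx = e^{λ t} ∫₀^∞ n(0,x) φ(0,x) dx. -/
open MeasureTheory Real

/-!
Pair the renewal equation for `n` with the adjoint equation for `φ`: by the product rule,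
`∂ₜ(nφ) = λ nφ - ∂ₓ(nφ) - φ(t,0) B n`. Integrating over `x > 0`, the transport term contributes
the boundary value `n(t,0) φ(t,0)`, which the renewal condition turns into `φ(t,0) ∫ B n`, cancelling
the birth term. Hence `F(t) = ∫ nφ` solves `F' = λ F`, so `F(t) = e^{λt} F(0)`.
-/

open Filter Set

theorem eq_exp_mul_smul_of_hasDerivAt {E : Type*} [NormedAddCommGroup E] [NormedSpace ℝ E]
    {f : ℝ → E} {c : ℝ} (hf : ∀ s, HasDerivAt f (c • f s) s) (t : ℝ) :
    f t = Real.exp (c * t) • f 0 := by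
  have hconst : ∀ s, HasDerivAt (fun u => Real.exp (-c * u) • f u) 0 s := by
    intro s
    have hexp : HasDerivAt (fun u => Real.exp (-c * u)) (Real.exp (-c * s) * -c) s := by
      simpa using ((hasDerivAt_id s).const_mul (-c)).exp
    refine (hexp.fun_smul (hf s)).congr_deriv ?_
    rw [smul_smul, ← add_smul]
    ring_nf
    simp
  have h := is_const_of_deriv_eq_zero (fun s => (hconst s).differentiableAt)
    (fun s => (hconst s).deriv) t 0
  rw [mul_zero, Real.exp_zero, one_smul] at h
  rw [← h, smul_smul, ← Real.exp_add, neg_mul, add_neg_cancel, Real.exp_zero, one_smul]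

section Partial

variable {𝕜 E F G : Type*} [NontriviallyNormedField 𝕜] [NormedAddCommGroup E] [NormedSpace 𝕜 E]
  [NormedAddCommGroup F] [NormedSpace 𝕜 F] [NormedAddCommGroup G] [NormedSpace 𝕜 G]
  {f : E → F → G} {x : E} {y : F}

theorem DifferentiableAt.partial_fst_s6
    (h : DifferentiableAt 𝕜 (fun p : E × F => f p.1 p.2) (x, y)) :
    DifferentiableAt 𝕜 (fun x' => f x' y) x :=
  h.comp (f := fun x' => (x', y)) x (differentiableAt_id.prodMk (differentiableAt_const y))

theorem DifferentiableAt.partial_snd_s6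
    (h : DifferentiableAt 𝕜 (fun p : E × F => f p.1 p.2) (x, y)) :
    DifferentiableAt 𝕜 (fun y' => f x y') y :=
  h.comp y ((differentiableAt_const x).prodMk differentiableAt_id)

end Partial

section Renewal

variable {n φ B d : ℝ → ℝ → ℝ} {lam t : ℝ}

theorem deriv_time_mul_eq_of_renewal_of_dual {x : ℝ}
    (hn : DifferentiableAt ℝ (fun p : ℝ × ℝ => n p.1 p.2) (t, x))
    (hφ : DifferentiableAt ℝ (fun p : ℝ × ℝ => φ p.1 p.2) (t, x))
    (hpde : deriv (fun s => n s x) t + deriv (fun y => n t y) x + d t x * n t x = 0)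
    (hdual : -(deriv (fun s => φ s x) t) - deriv (fun y => φ t y) x
        + (d t x + lam) * φ t x = B t x * φ t 0) :
    deriv (fun s => n s x * φ s x) t
      = lam * (n t x * φ t x) - deriv (fun y => n t y * φ t y) x - φ t 0 * (B t x * n t x) := by
  rw [deriv_fun_mul hn.partial_fst_s6 hφ.partial_fst_s6, deriv_fun_mul hn.partial_snd_s6 hφ.partial_snd_s6]
  linear_combination φ t x * hpde - n t x * hdual

theorem integral_deriv_time_mul_eq_of_renewal_of_dual
    (hn : ∀ x, 0 ≤ x → DifferentiableAt ℝ (fun p : ℝ × ℝ => n p.1 p.2) (t, x))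
    (hφ : ∀ x, 0 ≤ x → DifferentiableAt ℝ (fun p : ℝ × ℝ => φ p.1 p.2) (t, x))
    (hpde : ∀ x, 0 ≤ x →
      deriv (fun s => n s x) t + deriv (fun y => n t y) x + d t x * n t x = 0)
    (hdual : ∀ x, 0 ≤ x → -(deriv (fun s => φ s x) t) - deriv (fun y => φ t y) x
        + (d t x + lam) * φ t x = B t x * φ t 0)
    (hbc : n t 0 = ∫ x in Ioi (0 : ℝ), B t x * n t x)
    (hint_mass : IntegrableOn (fun x => n t x * φ t x) (Ioi 0))
    (hint_flux : IntegrableOn (fun x => deriv (fun y => n t y * φ t y) x) (Ioi 0))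
    (hint_birth : IntegrableOn (fun x => B t x * n t x) (Ioi 0))
    (hlim : Tendsto (fun x => n t x * φ t x) atTop (nhds 0)) :
    ∫ x in Ioi (0 : ℝ), deriv (fun s => n s x * φ s x) t
      = lam * ∫ x in Ioi (0 : ℝ), n t x * φ t x := by
  have hflux : ∫ x in Ioi (0 : ℝ), deriv (fun y => n t y * φ t y) x = -(n t 0 * φ t 0) := by
    have := integral_Ioi_of_hasDerivAt_of_tendsto'
      (fun x hx => ((hn x hx).partial_snd_s6.mul (hφ x hx).partial_snd_s6).hasDerivAt) hint_flux hlim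
    rwa [zero_sub] at this
  have hint_growth : IntegrableOn (fun x => lam * (n t x * φ t x)) (Ioi 0) :=
    hint_mass.const_mul lam
  have hdensity : EqOn (fun x => deriv (fun s => n s x * φ s x) t)
      (fun x => lam * (n t x * φ t x) - deriv (fun y => n t y * φ t y) x
        - φ t 0 * (B t x * n t x)) (Ioi 0) := fun x hx =>
    deriv_time_mul_eq_of_renewal_of_dual (hn x (le_of_lt hx)) (hφ x (le_of_lt hx))
      (hpde x (le_of_lt hx)) (hdual x (le_of_lt hx))
  rw [setIntegral_congr_fun measurableSet_Ioi hdensity,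
    integral_sub (hint_growth.fun_sub hint_flux) (hint_birth.const_mul _),
    integral_sub hint_growth hint_flux, integral_const_mul, integral_const_mul, hflux, ← hbc]
  ring

end Renewal

theorem weighted_mass_eq_exp_growth_general
    (B d : ℝ → ℝ → ℝ) (lam : ℝ)
    (φ : ℝ → ℝ → ℝ)
    (hφdiff : ∀ t x, 0 ≤ x → DifferentiableAt ℝ (fun p : ℝ × ℝ => φ p.1 p.2) (t, x))
    (hφeq : ∀ t x, 0 ≤ x →
      -(deriv (fun s => φ s x) t) - deriv (fun y => φ t y) x
        + (d t x + lam) * φ t x = B t x * φ t 0)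
    (n : ℝ → ℝ → ℝ)
    (hndiff : ∀ t x, 0 ≤ x → DifferentiableAt ℝ (fun p : ℝ × ℝ => n p.1 p.2) (t, x))
    (hpde : ∀ t x, 0 ≤ x →
      deriv (fun s => n s x) t + deriv (fun y => n t y) x + d t x * n t x = 0)
    (hbc : ∀ t, n t 0 = ∫ x in Set.Ioi (0 : ℝ), B t x * n t x)
    (hint₁ : ∀ t, IntegrableOn (fun x => n t x * φ t x) (Set.Ioi (0 : ℝ)))
    (hint₂ : ∀ t, IntegrableOn
      (fun x => deriv (fun y => n t y * φ t y) x) (Set.Ioi (0 : ℝ)))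
    (hint₃ : ∀ t, IntegrableOn (fun x => B t x * n t x) (Set.Ioi (0 : ℝ)))
    (hlim : ∀ t, Filter.Tendsto (fun x => n t x * φ t x) Filter.atTop (nhds 0))
    (hF : ∀ t, HasDerivAt (fun s => ∫ x in Set.Ioi (0 : ℝ), n s x * φ s x)
      (∫ x in Set.Ioi (0 : ℝ), deriv (fun s => n s x * φ s x) t) t) :
    ∀ t, (∫ x in Set.Ioi (0 : ℝ), n t x * φ t x) =
      Real.exp (lam * t) * ∫ x in Set.Ioi (0 : ℝ), n 0 x * φ 0 x := by
  have hmass : ∀ t, HasDerivAt (fun s => ∫ x in Set.Ioi (0 : ℝ), n s x * φ s x)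
      (lam • ∫ x in Set.Ioi (0 : ℝ), n t x * φ t x) t := fun t => by
    rw [smul_eq_mul, ← integral_deriv_time_mul_eq_of_renewal_of_dual (hndiff t) (hφdiff t)
      (hpde t) (hφeq t) (hbc t) (hint₁ t) (hint₂ t) (hint₃ t) (hlim t)]
    exact hF t
  exact eq_exp_mul_smul_of_hasDerivAt hmass

/-- If `φ` is a positive `T`-periodic dual Floquet eigenfunction, i.e. it
satisfies with equality `-∂ₜφ - ∂ₓφ + (d + λ) φ = B(t,x) φ(t,0)`, and `n` is a
nonnegative solution of the renewal equation `∂ₜn + ∂ₓn + d n = 0`,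
`n(t,0) = ∫₀^∞ B(t,x) n(t,x) dx`, then (under the natural integrability
assumptions) the solution grows exactly like `e^{λt}` in the weighted space:
`∫₀^∞ n(t,x) φ(t,x) dx = e^{λt} ∫₀^∞ n(0,x) φ(0,x) dx` for all `t`. -/
theorem weighted_mass_eq_exp_growth
    (T : ℝ) (hT : 0 < T) (B d : ℝ → ℝ → ℝ) (lam : ℝ)
    (hB : ∀ t x, 0 ≤ x → 0 ≤ B t x) (hd : ∀ t x, 0 ≤ x → 0 ≤ d t x)
    (hBp : ∀ t x, 0 ≤ x → B (t + T) x = B t x)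
    (hdp : ∀ t x, 0 ≤ x → d (t + T) x = d t x)
    (φ : ℝ → ℝ → ℝ)
    (hφpos : ∀ t x, 0 ≤ x → 0 < φ t x)
    (hφdiff : ∀ t x, 0 ≤ x → DifferentiableAt ℝ (fun p : ℝ × ℝ => φ p.1 p.2) (t, x))
    (hφper : ∀ t x, 0 ≤ x → φ (t + T) x = φ t x)
    (hφeq : ∀ t x, 0 ≤ x →
      -(deriv (fun s => φ s x) t) - deriv (fun y => φ t y) x
        + (d t x + lam) * φ t x = B t x * φ t 0)
    (n : ℝ → ℝ → ℝ)
    (hn0 : ∀ t x, 0 ≤ x → 0 ≤ n t x)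
    (hndiff : ∀ t x, 0 ≤ x → DifferentiableAt ℝ (fun p : ℝ × ℝ => n p.1 p.2) (t, x))
    (hpde : ∀ t x, 0 ≤ x →
      deriv (fun s => n s x) t + deriv (fun y => n t y) x + d t x * n t x = 0)
    (hbc : ∀ t, n t 0 = ∫ x in Set.Ioi (0 : ℝ), B t x * n t x)
    (hint₁ : ∀ t, IntegrableOn (fun x => n t x * φ t x) (Set.Ioi (0 : ℝ)))
    (hint₂ : ∀ t, IntegrableOn
      (fun x => deriv (fun y => n t y * φ t y) x) (Set.Ioi (0 : ℝ)))
    (hint₃ : ∀ t, IntegrableOn (fun x => B t x * n t x) (Set.Ioi (0 : ℝ)))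
    (hint₄ : ∀ t, IntegrableOn (fun x => d t x * n t x * φ t x) (Set.Ioi (0 : ℝ)))
    (hlim : ∀ t, Filter.Tendsto (fun x => n t x * φ t x) Filter.atTop (nhds 0))
    (hF : ∀ t, HasDerivAt (fun s => ∫ x in Set.Ioi (0 : ℝ), n s x * φ s x)
      (∫ x in Set.Ioi (0 : ℝ), deriv (fun s => n s x * φ s x) t) t) :
    ∀ t, (∫ x in Set.Ioi (0 : ℝ), n t x * φ t x) =
      Real.exp (lam * t) * ∫ x in Set.Ioi (0 : ℝ), n 0 x * φ 0 x :=
  weighted_mass_eq_exp_growth_general B d lam φ hφdiff hφeq n hndiff hpde hbc hint₁ hint₂ hint₃ hlim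
    hF
end
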